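/- arXiv:2112.13209 — 10 statements merged into one kernel-verified Lean document; each statement's English description precedes it below -/
import Mathlib

section
/- Let a_1,…,a_n be positive integers and b a positive integer. Define the set S = {(x,f) ∈ {0,1}^n × ℝ^{n+1} : ∑_{j=0}^n f_j = b, f_0 = 0, and −a_j x_j ≤ f_j ≤ a_j x_j for all j ∈ {1,…,n}}. Then there exists a subset J ⊆ {1,…,n} with ∑_{j∈J} a_j = b if and only if there exists (x,f) ∈ S with ∑_{j=1}^n a_j x_j − ∑_{j=1}^n f_j ≤ 0. (This is the correctness of the reduction from Subset-Sum used to prove NP-hardness of optimizing a linear function over S.) -/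
/-!
A subset `J` with `∑_{j ∈ J} aⱼ = b` gives the point `x = 𝟙_J`, `fⱼ = aⱼ xⱼ`, whose objective is `0`.
Conversely, since `fⱼ ≤ aⱼ xⱼ` termwise, a nonpositive objective forces `∑ fⱼ = ∑ aⱼ xⱼ`; together
with `f₀ = 0` and `∑ fⱼ = b` this makes `J = {j | xⱼ = 1}` a solution of Subset-Sum.
-/

open Finset

theorem Finset.sum_mul_eq_sum_filter_of_zero_or_one {ι : Type*} [Fintype ι] (c x : ι → ℝ)
    (hx : ∀ j, x j = 0 ∨ x j = 1) : ∑ j, c j * x j = ∑ j ∈ univ.filter (x · = 1), c j := by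
  rw [sum_filter]
  refine sum_congr rfl fun j _ => ?_
  rcases hx j with h | h <;> simp [h]

namespace SubsetSumReduction

variable {n : ℕ} (a : Fin n → ℝ) (b : ℝ)

def polytope : Set ((Fin n → ℝ) × (Fin (n + 1) → ℝ)) :=
  {p | (∀ j, p.1 j = 0 ∨ p.1 j = 1) ∧
    (∑ j, p.2 j) = b ∧ p.2 0 = 0 ∧
    ∀ j : Fin n, -(a j * p.1 j) ≤ p.2 j.succ ∧ p.2 j.succ ≤ a j * p.1 j}

def objective (p : (Fin n → ℝ) × (Fin (n + 1) → ℝ)) : ℝ :=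
  (∑ j, a j * p.1 j) - ∑ j : Fin n, p.2 j.succ

def indicatorPoint (J : Finset (Fin n)) : (Fin n → ℝ) × (Fin (n + 1) → ℝ) :=
  let x : Fin n → ℝ := fun j => if j ∈ J then 1 else 0
  (x, Fin.cons 0 fun j => a j * x j)

variable {a b}

theorem objective_indicatorPoint (J : Finset (Fin n)) : objective a (indicatorPoint a J) = 0 := by
  simp [objective, indicatorPoint]

theorem indicatorPoint_mem_polytope (ha : ∀ j, 0 ≤ a j) {J : Finset (Fin n)}
    (hJ : ∑ j ∈ J, a j = b) : indicatorPoint a J ∈ polytope a b := by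
  refine ⟨fun j => ?_, ?_, rfl, fun j => ?_⟩
  · by_cases h : j ∈ J <;> simp [indicatorPoint, h]
  · simpa [indicatorPoint, Fin.sum_cons] using hJ
  · by_cases h : j ∈ J <;> simp [indicatorPoint, h, ha j]

theorem sum_filter_eq_of_mem_polytope {p : (Fin n → ℝ) × (Fin (n + 1) → ℝ)}
    (hp : p ∈ polytope a b) (hobj : objective a p ≤ 0) :
    ∑ j ∈ univ.filter (p.1 · = 1), a j = b := by
  obtain ⟨hx, hsum, h0, hbd⟩ := hp
  have hflow : ∑ j : Fin n, p.2 j.succ = ∑ j, a j * p.1 j :=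
    le_antisymm (sum_le_sum fun j _ => (hbd j).2) (by unfold objective at hobj; linarith)
  rw [← sum_mul_eq_sum_filter_of_zero_or_one a p.1 hx, ← hflow, ← hsum, Fin.sum_univ_succ, h0,
    zero_add]

end SubsetSumReduction

open SubsetSumReduction in
theorem subset_sum_reduction_general (n : ℕ) (a : Fin n → ℤ) (ha : ∀ j, 0 < a j)
    (b : ℤ)
    (S : Set ((Fin n → ℝ) × (Fin (n + 1) → ℝ)))
    (hS : S = {p | (∀ j, p.1 j = 0 ∨ p.1 j = 1) ∧
      (∑ j, p.2 j) = (b : ℝ) ∧ p.2 0 = 0 ∧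
      ∀ j : Fin n, -((a j : ℝ) * p.1 j) ≤ p.2 j.succ ∧ p.2 j.succ ≤ (a j : ℝ) * p.1 j}) :
    (∃ J : Finset (Fin n), ∑ j ∈ J, a j = b) ↔
      (∃ p ∈ S, (∑ j, (a j : ℝ) * p.1 j) - (∑ j : Fin n, p.2 j.succ) ≤ 0) := by
  change S = polytope (fun j => (a j : ℝ)) b at hS
  subst hS
  constructor
  · rintro ⟨J, hJ⟩
    exact ⟨indicatorPoint _ J,
      indicatorPoint_mem_polytope (fun j => mod_cast (ha j).le) (mod_cast hJ),
      (objective_indicatorPoint J).le⟩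
  · rintro ⟨p, hp, hobj⟩
    exact ⟨_, mod_cast sum_filter_eq_of_mem_polytope hp hobj⟩

/-- correctness of the reduction from Subset-Sum to optimizing a
linear function over the node-based set `S`. -/
theorem subset_sum_reduction (n : ℕ) (a : Fin n → ℤ) (ha : ∀ j, 0 < a j)
    (b : ℤ) (hb : 0 < b)
    (S : Set ((Fin n → ℝ) × (Fin (n + 1) → ℝ)))
    (hS : S = {p | (∀ j, p.1 j = 0 ∨ p.1 j = 1) ∧
      (∑ j, p.2 j) = (b : ℝ) ∧ p.2 0 = 0 ∧
      ∀ j : Fin n, -((a j : ℝ) * p.1 j) ≤ p.2 j.succ ∧ p.2 j.succ ≤ (a j : ℝ) * p.1 j}) :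
    (∃ J : Finset (Fin n), ∑ j ∈ J, a j = b) ↔
      (∃ p ∈ S, (∑ j, (a j : ℝ) * p.1 j) - (∑ j : Fin n, p.2 j.succ) ≤ 0) :=
  subset_sum_reduction_general n a ha b S hS
end

section
/- The set of extreme points of conv(S) equals {(x,f) ∈ {0,1}^n × ℝ^{n+1} : f is an extreme point of S(x)}, where for x ∈ {0,1}^n, J(x) = {0} ∪ {j : x_j = 1} and S(x) = {f ∈ ℝ^{n+1} : ∑_{j∈J(x)} f_j = d, f̲_j ≤ f_j ≤ f̄_j for j ∈ J(x), f_j = 0 for j ∉ J(x)}. -/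
/-!
Every point of `conv S` has its `x`-part in the cube `[0,1]^n`, whose extreme points are the
binary vectors. Over an extreme point `x` of a convex set containing all `x`-parts, `(x, f)` is
extreme in `conv S` iff `f` is extreme in the fiber of `conv S` over `x`. Extreme points of
`conv S` lie in `S`, so their `x` is binary; and over a binary `x` the fiber of `conv S` is
squeezed between the fiber of `S` and the fiber of the (convex) continuous relaxation of `S`,
both of which are `S(x)`.
-/

open scoped Classical
open Set

theorem Prod.mk_mem_extremePoints_iff_of_fst_mem_extremePoints {𝕜 E F : Type*} [Semiring 𝕜]
    [PartialOrder 𝕜] [AddCommGroup E] [AddCommGroup F] [Module 𝕜 E] [Module 𝕜 F]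
    {H : Set (E × F)} {K : Set E} (hK : ∀ p ∈ H, p.1 ∈ K) {x : E}
    (hx : x ∈ K.extremePoints 𝕜) (f : F) :
    (x, f) ∈ H.extremePoints 𝕜 ↔ f ∈ (Prod.mk x ⁻¹' H).extremePoints 𝕜 := by
  refine and_congr_right fun _ ↦ ⟨fun h g₁ hg₁ g₂ hg₂ hf ↦ ?_, fun h p₁ hp₁ p₂ hp₂ hp ↦ ?_⟩
  · exact congrArg Prod.snd <|
      h hg₁ hg₂ (Prod.image_mk_openSegment_right (𝕜 := 𝕜) x g₁ g₂ ▸ mem_image_of_mem _ hf)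
  · obtain ⟨a, b, ha, hb, hab, hpx⟩ := hp
    obtain ⟨hp₁x, hp₂x⟩ := (mem_extremePoints.1 hx).2 _ (hK p₁ hp₁) _ (hK p₂ hp₂)
      ⟨a, b, ha, hb, hab, congrArg Prod.fst hpx⟩
    have hp₁f : p₁.2 = f := h (x₁ := p₁.2) (by rwa [← hp₁x]) (x₂ := p₂.2) (by rwa [← hp₂x])
      ⟨a, b, ha, hb, hab, congrArg Prod.snd hpx⟩
    exact Prod.ext hp₁x hp₁f

theorem mem_extremePoints_pi_Icc_iff {ι : Type*} {a b : ℝ} (hab : a ≤ b) (x : ι → ℝ) :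
    x ∈ (univ.pi fun _ ↦ Icc a b).extremePoints ℝ ↔ ∀ i, x i = a ∨ x i = b := by
  rw [extremePoints_pi]
  simp [extremePoints_Icc hab]

section ContinuousRelaxation

variable {n : ℕ} (flo fup : Fin (n + 1) → ℝ) (d : ℝ)

def continuousRelaxation : Set ((Fin n → ℝ) × (Fin (n + 1) → ℝ)) :=
  {p | (∑ j, p.2 j) = d ∧ flo 0 ≤ p.2 0 ∧ p.2 0 ≤ fup 0 ∧
    ∀ j : Fin n, -(fup j.succ * p.1 j) ≤ p.2 j.succ ∧ p.2 j.succ ≤ fup j.succ * p.1 j}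

theorem convex_continuousRelaxation : Convex ℝ (continuousRelaxation flo fup d) := by
  rintro p ⟨hp, hp₀, hp₀', hpj⟩ q ⟨hq, hq₀, hq₀', hqj⟩ a b ha hb hab
  simp only [continuousRelaxation, mem_ofPred_eq, Prod.fst_add, Prod.snd_add, Prod.smul_fst,
    Prod.smul_snd, Pi.add_apply, Pi.smul_apply, smul_eq_mul, Finset.sum_add_distrib,
    ← Finset.mul_sum]
  refine ⟨?_, ?_, ?_, fun j ↦ ⟨?_, ?_⟩⟩
  · linear_combination a * hp + b * hq + d * hab
  · linear_combination a * hp₀ + b * hq₀ - flo 0 * hab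
  · linear_combination a * hp₀' + b * hq₀' + fup 0 * hab
  · linear_combination a * (hpj j).1 + b * (hqj j).1
  · linear_combination a * (hpj j).2 + b * (hqj j).2

theorem mk_mem_continuousRelaxation_iff {x : Fin n → ℝ} (hx : ∀ j, x j = 0 ∨ x j = 1)
    (hlo : ∀ j : Fin n, flo j.succ = -(fup j.succ)) {J : Set (Fin (n + 1))}
    (hJ : J = {0} ∪ {i | ∃ j : Fin n, j.succ = i ∧ x j = 1}) (f : Fin (n + 1) → ℝ) :
    (x, f) ∈ continuousRelaxation flo fup d ↔ (∑ i ∈ Finset.univ.filter (· ∈ J), f i) = d ∧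
      (∀ i ∈ J, flo i ≤ f i ∧ f i ≤ fup i) ∧ ∀ i ∉ J, f i = 0 := by
  have h0J : (0 : Fin (n + 1)) ∈ J := hJ ▸ Or.inl rfl
  have hsuccJ (j : Fin n) : j.succ ∈ J ↔ x j = 1 := by
    simp [hJ, Fin.succ_ne_zero]
  have hbounds (j : Fin n) :
      (-(fup j.succ * x j) ≤ f j.succ ∧ f j.succ ≤ fup j.succ * x j) ↔
        (j.succ ∈ J → flo j.succ ≤ f j.succ ∧ f j.succ ≤ fup j.succ) ∧
          (j.succ ∉ J → f j.succ = 0) := by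
    rw [hsuccJ, hlo]
    rcases hx j with h | h <;> simp [h, le_antisymm_iff, and_comm]
  have hcoords : ((∀ i ∈ J, flo i ≤ f i ∧ f i ≤ fup i) ∧ ∀ i ∉ J, f i = 0) ↔
      (flo 0 ≤ f 0 ∧ f 0 ≤ fup 0) ∧
        ∀ j : Fin n, -(fup j.succ * x j) ≤ f j.succ ∧ f j.succ ≤ fup j.succ * x j := by
    simp only [hbounds, ← forall_and, h0J, true_implies, not_true, false_implies, and_true,
      Fin.forall_fin_succ (P := fun i ↦ (i ∈ J → _) ∧ (i ∉ J → _))]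
  have hsum (hz : ∀ i ∉ J, f i = 0) : ∑ i ∈ Finset.univ.filter (· ∈ J), f i = ∑ i, f i :=
    Finset.sum_filter_of_ne fun i _ hi ↦ by_contra fun h ↦ hi (hz i h)
  change (∑ i, f i = d ∧ flo 0 ≤ f 0 ∧ f 0 ≤ fup 0 ∧ _) ↔ _
  rw [← and_assoc (a := flo 0 ≤ f 0), ← hcoords]
  exact ⟨fun ⟨hf, hc⟩ ↦ ⟨(hsum hc.2).trans hf, hc⟩,
    fun ⟨hf, hc⟩ ↦ ⟨(hsum hc.2).symm.trans hf, hc⟩⟩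

end ContinuousRelaxation

theorem extremePoints_convexHull_S_general (n : ℕ)
    (flo fup : Fin (n + 1) → ℝ)
    (hlo : ∀ j : Fin n, flo j.succ = -(fup j.succ))
    (d : ℝ)
    (S : Set ((Fin n → ℝ) × (Fin (n + 1) → ℝ)))
    (hS : S = {p | (∀ j, p.1 j = 0 ∨ p.1 j = 1) ∧
      (∑ j, p.2 j) = d ∧ flo 0 ≤ p.2 0 ∧ p.2 0 ≤ fup 0 ∧
      ∀ j : Fin n, -(fup j.succ * p.1 j) ≤ p.2 j.succ ∧ p.2 j.succ ≤ fup j.succ * p.1 j})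
    (Jset : (Fin n → ℝ) → Set (Fin (n + 1)))
    (hJset : ∀ x, Jset x = {0} ∪ {i | ∃ j : Fin n, j.succ = i ∧ x j = 1})
    (Sx : (Fin n → ℝ) → Set (Fin (n + 1) → ℝ))
    (hSx : ∀ x, Sx x = {f | (∑ i ∈ Finset.univ.filter (· ∈ Jset x), f i) = d ∧
      (∀ i ∈ Jset x, flo i ≤ f i ∧ f i ≤ fup i) ∧ (∀ i ∉ Jset x, f i = 0)}) :
    Set.extremePoints ℝ (convexHull ℝ S) =
      {p : (Fin n → ℝ) × (Fin (n + 1) → ℝ) |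
        (∀ j, p.1 j = 0 ∨ p.1 j = 1) ∧ p.2 ∈ Set.extremePoints ℝ (Sx p.1)} := by
  replace hS : S = {p | ∀ j, p.1 j = 0 ∨ p.1 j = 1} ∩ continuousRelaxation flo fup d := hS
  have hbinary (x : Fin n → ℝ) :
      x ∈ (univ.pi fun _ ↦ Icc (0 : ℝ) 1).extremePoints ℝ ↔ ∀ j, x j = 0 ∨ x j = 1 :=
    mem_extremePoints_pi_Icc_iff zero_le_one x
  have hS_cube : S ⊆ (univ.pi fun _ ↦ Icc (0 : ℝ) 1) ×ˢ univ := fun p hp ↦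
    ⟨extremePoints_subset ((hbinary p.1).2 (hS ▸ hp).1), mem_univ _⟩
  have hconv_cube : ∀ p ∈ convexHull ℝ S, p.1 ∈ univ.pi fun _ ↦ Icc (0 : ℝ) 1 := fun p hp ↦
    (convexHull_min hS_cube ((convex_pi fun _ _ ↦ convex_Icc 0 1).prod convex_univ) hp).1
  have hfiber (x : Fin n → ℝ) (hx : ∀ j, x j = 0 ∨ x j = 1) :
      Prod.mk x ⁻¹' convexHull ℝ S = Sx x := by
    ext f
    rw [hSx, mem_ofPred_eq, ← mk_mem_continuousRelaxation_iff flo fup d hx hlo (hJset x)]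
    exact ⟨fun hf ↦ convexHull_min (hS ▸ inter_subset_right)
      (convex_continuousRelaxation flo fup d) hf, fun hf ↦ subset_convexHull ℝ S (hS ▸ ⟨hx, hf⟩)⟩
  have hextreme (x : Fin n → ℝ) (hx : ∀ j, x j = 0 ∨ x j = 1) (f : Fin (n + 1) → ℝ) :
      (x, f) ∈ (convexHull ℝ S).extremePoints ℝ ↔ f ∈ (Sx x).extremePoints ℝ := by
    rw [← hfiber x hx]
    exact Prod.mk_mem_extremePoints_iff_of_fst_mem_extremePoints hconv_cube ((hbinary x).2 hx) f
  ext ⟨x, f⟩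
  refine ⟨fun hp ↦ ?_, fun ⟨hx, hf⟩ ↦ (hextreme x hx f).2 hf⟩
  have hx : ∀ j, x j = 0 ∨ x j = 1 := (hS ▸ extremePoints_convexHull_subset hp).1
  exact ⟨hx, (hextreme x hx f).1 hp⟩

/-- the extreme points of `conv(S)` are exactly the pairs `(x,f)`
with binary `x` such that `f` is an extreme point of the restriction `S(x)`. -/
theorem extremePoints_convexHull_S (n : ℕ) (hn : 1 ≤ n)
    (flo fup : Fin (n + 1) → ℝ)
    (h0 : flo 0 ≤ fup 0)
    (hpos : ∀ j : Fin n, 0 ≤ fup j.succ)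
    (hlo : ∀ j : Fin n, flo j.succ = -(fup j.succ))
    (d : ℝ)
    (S : Set ((Fin n → ℝ) × (Fin (n + 1) → ℝ)))
    (hS : S = {p | (∀ j, p.1 j = 0 ∨ p.1 j = 1) ∧
      (∑ j, p.2 j) = d ∧ flo 0 ≤ p.2 0 ∧ p.2 0 ≤ fup 0 ∧
      ∀ j : Fin n, -(fup j.succ * p.1 j) ≤ p.2 j.succ ∧ p.2 j.succ ≤ fup j.succ * p.1 j})
    (Jset : (Fin n → ℝ) → Set (Fin (n + 1)))
    (hJset : ∀ x, Jset x = {0} ∪ {i | ∃ j : Fin n, j.succ = i ∧ x j = 1})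
    (Sx : (Fin n → ℝ) → Set (Fin (n + 1) → ℝ))
    (hSx : ∀ x, Sx x = {f | (∑ i ∈ Finset.univ.filter (· ∈ Jset x), f i) = d ∧
      (∀ i ∈ Jset x, flo i ≤ f i ∧ f i ≤ fup i) ∧ (∀ i ∉ Jset x, f i = 0)}) :
    Set.extremePoints ℝ (convexHull ℝ S) =
      {p : (Fin n → ℝ) × (Fin (n + 1) → ℝ) |
        (∀ j, p.1 j = 0 ∨ p.1 j = 1) ∧ p.2 ∈ Set.extremePoints ℝ (Sx p.1)} :=
  extremePoints_convexHull_S_general n flo fup hlo d S hS Jset hJset Sx hSx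
end

section
/- Define, for k ∈ {0,…,n}, the finite set V_k = {d − ∑_{j ∈ {0,…,n}\{k}} g_j : g_j ∈ E_j for all j ≠ k} ∩ [f̲_k, f̄_k], where E_0 = {f̲_0, f̄_0} and E_j = {−f̄_j, 0, f̄_j} for j ∈ {1,…,n}, and (with the convention x_0 = 1) let O = ⋃_{k=0}^n {(x,f) ∈ [0,1]^n × ℝ^{n+1} : ∑_{j=0}^n f_j = d, f̲_j x_j ≤ f_j ≤ f̄_j x_j for j ∈ {0,…,n}, f_k ∈ conv(V_k), x_k = 1}. Then conv(S) ⊆ conv(O). -/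
/-!
Fix the binary part `x` of a point of `S`. Its continuous part `f` lies in the polytope cut out of
the box `∏ [f̲ᵢ xᵢ, f̄ᵢ xᵢ]` by the hyperplane `∑ fᵢ = d`. Call a coordinate off-grid when its value
is not in `Eᵢ`; every off-grid value lies strictly between two grid values of its interval. If two
coordinates `j ≠ k` are off-grid, moving mass between them along `e_j - e_k` in either direction
stays in the polytope until one of them reaches a grid value, and `f` lies on the segment between
the two end points. By induction on the number of off-grid coordinates, `f` is a convex
combination of points of the polytope with at most one off-grid coordinate `k`. Such a point lies
in the `k`-th piece of `O`: `xₖ = 1` because an off-grid coordinate cannot have `xₖ = 0`, and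
`fₖ = d - ∑_{j ≠ k} fⱼ ∈ Vₖ`.
-/

open Set

def Brackets (E : Set ℝ) (lo hi : ℝ) : Prop :=
  ∀ t ∈ Icc lo hi \ E, ∃ a ∈ E ∩ Icc lo hi, ∃ b ∈ E ∩ Icc lo hi, a < t ∧ t < b

lemma brackets_of_Icc_subset {E : Set ℝ} {lo hi : ℝ} (h : Icc lo hi ⊆ E) : Brackets E lo hi :=
  fun _t ht ↦ (ht.2 (h ht.1)).elim

lemma brackets_pair (lo hi : ℝ) : Brackets {lo, hi} lo hi := by
  rintro t ⟨⟨hlo, hhi⟩, ht⟩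
  simp only [mem_insert_iff, mem_singleton_iff, not_or] at ht
  exact ⟨lo, by simp [hlo.trans hhi], hi, by simp [hlo.trans hhi],
    lt_of_le_of_ne hlo (Ne.symm ht.1), lt_of_le_of_ne hhi ht.2⟩

lemma brackets_triple {lo c hi : ℝ} (hc : c ∈ Icc lo hi) : Brackets {lo, c, hi} lo hi := by
  rintro t ⟨⟨hlo, hhi⟩, ht⟩
  simp only [mem_insert_iff, mem_singleton_iff, not_or] at ht
  have hlo' : lo ∈ Icc lo hi := ⟨le_rfl, hlo.trans hhi⟩
  have hhi' : hi ∈ Icc lo hi := ⟨hlo.trans hhi, le_rfl⟩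
  rcases lt_or_gt_of_ne ht.2.1 with htc | htc
  · exact ⟨lo, ⟨by simp, hlo'⟩, c, ⟨by simp, hc⟩, lt_of_le_of_ne hlo (Ne.symm ht.1), htc⟩
  · exact ⟨c, ⟨by simp, hc⟩, hi, ⟨by simp, hhi'⟩, htc, lt_of_le_of_ne hhi ht.2.2⟩

lemma brackets_symm_mul {u w : ℝ} (hu : 0 ≤ u) (hw : w = 0 ∨ w = 1) :
    Brackets {-u, 0, u} (-u * w) (u * w) := by
  rcases hw with rfl | rfl
  · exact brackets_of_Icc_subset (by simp)
  · simpa using brackets_triple (⟨by linarith, hu⟩ : (0 : ℝ) ∈ Icc (-u) u)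

lemma eq_one_of_mem_Icc_mul {E : Set ℝ} {a b w t : ℝ} (hw : w = 0 ∨ w = 1) (hE : 0 ∈ E)
    (ht : t ∈ Icc (a * w) (b * w)) (htE : t ∉ E) : w = 1 := by
  refine hw.resolve_left fun hw0 ↦ htE ?_
  rw [hw0, mul_zero, mul_zero, Icc_self, mem_singleton_iff] at ht
  exact ht ▸ hE

lemma mem_segment_sub_smul_add_smul {V : Type*} [AddCommGroup V] [Module ℝ V] (x v : V)
    {s t : ℝ} (hs : 0 ≤ s) (ht : 0 ≤ t) : x ∈ segment ℝ (x - s • v) (x + t • v) := by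
  rw [mem_segment_iff_sameRay, sub_sub_cancel, add_sub_cancel_left]
  exact (SameRay.sameRay_nonneg_smul_left v hs).nonneg_smul_right ht

lemma mk_mem_convexHull_of_forall_mk_mem {V W : Type*} [AddCommGroup V] [Module ℝ V]
    [AddCommGroup W] [Module ℝ W] {s : Set (V × W)} {t : Set W} {x : V}
    (h : ∀ g ∈ t, (x, g) ∈ s) {f : W} (hf : f ∈ convexHull ℝ t) : (x, f) ∈ convexHull ℝ s := by
  have hxf : (x, f) ∈ {x} ×ˢ convexHull ℝ t := ⟨rfl, hf⟩
  rw [← convexHull_singleton (𝕜 := ℝ) x, ← convexHull_prod] at hxf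
  refine convexHull_mono ?_ hxf
  rintro ⟨y, g⟩ ⟨rfl, hg⟩
  exact h g hg

lemma Set.Subsingleton.exists_forall_ne_notMem {ι : Type*} {s : Set ι} (hs : s.Subsingleton)
    {P : ι → Prop} (hP : ∀ i ∈ s, P i) {i₀ : ι} (h₀ : P i₀) : ∃ k, P k ∧ ∀ j ≠ k, j ∉ s := by
  rcases hs.eq_empty_or_singleton with rfl | ⟨k, rfl⟩
  · exact ⟨i₀, h₀, fun j _ ↦ notMem_empty j⟩
  · exact ⟨k, hP k rfl, fun j hj ↦ hj⟩

section Slice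

variable {ι : Type*} [Fintype ι]

def offGrid (E : ι → Set ℝ) (g : ι → ℝ) : Set ι := {i | g i ∉ E i}

def boxSlice (lo hi : ι → ℝ) (d : ℝ) : Set (ι → ℝ) := Icc lo hi ∩ {g | ∑ i, g i = d}

omit [Fintype ι] in
lemma offGrid_ssubset {E : ι → Set ℝ} {g h : ι → ℝ} {i₀ : ι}
    (hgh : ∀ i, h i ≠ g i → i ∈ offGrid E g) (hi₀ : i₀ ∈ offGrid E g) (hh : h i₀ ∈ E i₀) :
    offGrid E h ⊂ offGrid E g := by
  refine ssubset_of_subset_not_subset (fun i hi ↦ ?_) fun hsub ↦ hsub hi₀ hh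
  by_cases hhg : h i = g i
  · exact fun hg ↦ hi (hhg ▸ hg)
  · exact hgh i hhg

variable [DecidableEq ι]

lemma sum_add_smul_single_sub_single (g : ι → ℝ) (t : ℝ) (j k : ι) :
    ∑ i, (g + t • (Pi.single j 1 - Pi.single k 1 : ι → ℝ)) i = ∑ i, g i := by
  simp [Finset.sum_add_distrib, ← Finset.mul_sum]

omit [Fintype ι] in
lemma add_smul_single_sub_single_apply (g : ι → ℝ) (t : ℝ) {j k : ι} (hjk : j ≠ k) (i : ι) :
    (g + t • (Pi.single j 1 - Pi.single k 1 : ι → ℝ)) i =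
      if i = j then g j + t else if i = k then g k - t else g i := by
  rcases eq_or_ne i j with rfl | hij
  · simp [hjk]
  rcases eq_or_ne i k with rfl | hik
  · simp [hij, sub_eq_add_neg]
  · simp [hij, hik]

lemma add_smul_single_sub_single_mem_boxSlice {lo hi : ι → ℝ} {d : ℝ} {g : ι → ℝ}
    (hg : g ∈ boxSlice lo hi d) {j k : ι} (hjk : j ≠ k) {t : ℝ} (ht : 0 ≤ t)
    (hj : g j + t ≤ hi j) (hk : lo k ≤ g k - t) :
    g + t • (Pi.single j 1 - Pi.single k 1 : ι → ℝ) ∈ boxSlice lo hi d := by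
  refine ⟨⟨fun i ↦ ?_, fun i ↦ ?_⟩, (sum_add_smul_single_sub_single g t j k).trans hg.2⟩
  all_goals
    rw [add_smul_single_sub_single_apply g t hjk]
    split_ifs with hij hik
    · subst hij; linarith [hg.1.1 i]
    · subst hik; linarith [hg.1.2 i]
    · first | exact hg.1.1 i | exact hg.1.2 i

lemma exists_shift_mem_boxSlice {E : ι → Set ℝ} {lo hi : ι → ℝ} {d : ℝ}
    (hE : ∀ i, Brackets (E i) (lo i) (hi i)) {g : ι → ℝ} (hg : g ∈ boxSlice lo hi d)
    {j k : ι} (hjk : j ≠ k) (hj : j ∈ offGrid E g) (hk : k ∈ offGrid E g) :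
    ∃ t : ℝ, 0 ≤ t ∧ g + t • (Pi.single j 1 - Pi.single k 1 : ι → ℝ) ∈ boxSlice lo hi d ∧
      offGrid E (g + t • (Pi.single j 1 - Pi.single k 1 : ι → ℝ)) ⊂ offGrid E g := by
  obtain ⟨-, -, b, ⟨hbE, -, hbhi⟩, -, hb⟩ := hE j (g j) ⟨⟨hg.1.1 j, hg.1.2 j⟩, hj⟩
  obtain ⟨a, ⟨haE, hloa, -⟩, -, -, ha, -⟩ := hE k (g k) ⟨⟨hg.1.1 k, hg.1.2 k⟩, hk⟩
  set t := min (b - g j) (g k - a)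
  have ht : t ≤ b - g j := min_le_left _ _
  have ht' : t ≤ g k - a := min_le_right _ _
  have ht0 : 0 ≤ t := le_min (by linarith) (by linarith)
  have happ := add_smul_single_sub_single_apply g t hjk
  have hmoved (i : ι) (hi : (g + t • (Pi.single j 1 - Pi.single k 1 : ι → ℝ)) i ≠ g i) :
      i ∈ offGrid E g := by
    rw [happ] at hi
    split_ifs at hi with hij hik
    · exact hij ▸ hj
    · exact hik ▸ hk
    · exact absurd rfl hi
  refine ⟨t, ht0, add_smul_single_sub_single_mem_boxSlice hg hjk ht0 (by linarith)
    (by linarith), ?_⟩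
  rcases min_choice (b - g j) (g k - a) with h | h
  · refine offGrid_ssubset hmoved hj ?_
    rwa [happ, if_pos rfl, show t = b - g j from h, add_sub_cancel]
  · refine offGrid_ssubset hmoved hk ?_
    rwa [happ, if_neg hjk.symm, if_pos rfl, show t = g k - a from h, sub_sub_cancel]

theorem boxSlice_subset_convexHull {E : ι → Set ℝ} {lo hi : ι → ℝ} {d : ℝ}
    (hE : ∀ i, Brackets (E i) (lo i) (hi i)) :
    boxSlice lo hi d ⊆ convexHull ℝ {g ∈ boxSlice lo hi d | (offGrid E g).Subsingleton} := by
  intro g hg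
  induction hm : (offGrid E g).ncard using Nat.strong_induction_on generalizing g with
  | _ m ih =>
    rcases (offGrid E g).subsingleton_or_nontrivial with hsub | ⟨j, hj, k, hk, hjk⟩
    · exact subset_convexHull ℝ _ ⟨hg, hsub⟩
    obtain ⟨t, ht, hgt, hlt⟩ := exists_shift_mem_boxSlice hE hg hjk hj hk
    obtain ⟨s, hs, hgs, hls⟩ := exists_shift_mem_boxSlice hE hg hjk.symm hk hj
    rw [← neg_sub, smul_neg, ← sub_eq_add_neg] at hgs hls
    exact (convex_convexHull ℝ _).segment_subset
      (ih _ (hm ▸ ncard_lt_ncard hls) hgs rfl) (ih _ (hm ▸ ncard_lt_ncard hlt) hgt rfl)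
      (mem_segment_sub_smul_add_smul g _ hs ht)

end Slice

theorem convS_subset_convO_general (n : ℕ)
    (flo fup : Fin (n + 1) → ℝ)
    (hpos : ∀ j : Fin n, 0 ≤ fup j.succ)
    (hlo : ∀ j : Fin n, flo j.succ = -(fup j.succ))
    (d : ℝ)
    (S : Set ((Fin n → ℝ) × (Fin (n + 1) → ℝ)))
    (hS : S = {p | (∀ j, p.1 j = 0 ∨ p.1 j = 1) ∧
      (∑ j, p.2 j) = d ∧ flo 0 ≤ p.2 0 ∧ p.2 0 ≤ fup 0 ∧
      ∀ j : Fin n, -(fup j.succ * p.1 j) ≤ p.2 j.succ ∧ p.2 j.succ ≤ fup j.succ * p.1 j})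
    -- `xe x` is the extension of `x` by the convention `x₀ = 1`
    (xe : (Fin n → ℝ) → Fin (n + 1) → ℝ)
    (hxe : ∀ x, xe x = Fin.cases (motive := fun _ => ℝ) 1 x)
    -- the finite candidate-value sets `E_j`
    (E : Fin (n + 1) → Set ℝ)
    (hE : E = Fin.cases (motive := fun _ => Set ℝ) {flo 0, fup 0}
      (fun j => {-(fup j.succ), 0, fup j.succ}))
    -- the sets `V_k`
    (V : Fin (n + 1) → Set ℝ)
    (hV : ∀ k, V k = {v | (∃ g : Fin (n + 1) → ℝ, (∀ j, j ≠ k → g j ∈ E j) ∧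
        v = d - ∑ j ∈ Finset.univ.erase k, g j)} ∩ Set.Icc (flo k) (fup k))
    -- the outer-approximation set `O`
    (O : Set ((Fin n → ℝ) × (Fin (n + 1) → ℝ)))
    (hO : O = ⋃ k : Fin (n + 1), {p | (∀ j, 0 ≤ p.1 j ∧ p.1 j ≤ 1) ∧
      (∑ j, p.2 j) = d ∧
      (∀ i : Fin (n + 1), flo i * xe p.1 i ≤ p.2 i ∧ p.2 i ≤ fup i * xe p.1 i) ∧
      p.2 k ∈ convexHull ℝ (V k) ∧ xe p.1 k = 1}) :
    convexHull ℝ S ⊆ convexHull ℝ O := by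
  obtain rfl : xe = fun x ↦ Fin.cases 1 x := funext hxe
  subst hS
  refine convexHull_min ?_ (convex_convexHull ℝ O)
  rintro ⟨x, f⟩ ⟨hx, hsum, hf0, hf0', hf⟩
  dsimp only at hx hsum hf0 hf0' hf
  set lo : Fin (n + 1) → ℝ := fun i ↦ flo i * Fin.cases 1 x i
  set hi : Fin (n + 1) → ℝ := fun i ↦ fup i * Fin.cases 1 x i
  have hbr : ∀ i, Brackets (E i) (lo i) (hi i) := by
    subst hE
    refine Fin.cases (by simpa [lo, hi] using brackets_pair (flo 0) (fup 0)) fun j ↦ ?_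
    simpa [lo, hi, hlo] using brackets_symm_mul (hpos j) (hx j)
  have hf : f ∈ boxSlice lo hi d := by
    refine ⟨⟨Fin.cases ?_ fun j ↦ ?_, Fin.cases ?_ fun j ↦ ?_⟩, hsum⟩
    all_goals simp only [lo, hi, Fin.cases_zero, Fin.cases_succ, mul_one, hlo, neg_mul]
    exacts [hf0, (hf j).1, hf0', (hf j).2]
  refine mk_mem_convexHull_of_forall_mk_mem (fun g hg ↦ ?_) (boxSlice_subset_convexHull hbr hf)
  obtain ⟨hg, hgrid⟩ := hg
  have hoff : ∀ i ∈ offGrid E g, Fin.cases 1 x i = (1 : ℝ) := Fin.cases (fun _ ↦ rfl)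
    fun j hj ↦ eq_one_of_mem_Icc_mul (hx j) (by simp [hE]) ⟨hg.1.1 j.succ, hg.1.2 j.succ⟩ hj
  obtain ⟨k, hk, hgE⟩ := hgrid.exists_forall_ne_notMem hoff (i₀ := 0) rfl
  rw [hO]
  refine mem_iUnion.2 ⟨k, fun j ↦ ?_, hg.2, fun i ↦ ⟨hg.1.1 i, hg.1.2 i⟩,
    subset_convexHull ℝ _ ?_, hk⟩
  · rcases hx j with h | h <;> simp [h]
  rw [hV]
  refine ⟨⟨g, fun j hj ↦ not_not.1 (hgE j hj), ?_⟩, ?_⟩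
  · exact eq_sub_of_add_eq ((Finset.add_sum_erase _ g (Finset.mem_univ k)).trans hg.2)
  · simpa [lo, hi, hk] using And.intro (hg.1.1 k) (hg.1.2 k)

/-- the disjunctive set `O` gives an outer approximation of
`conv(S)`, i.e. `conv(S) ⊆ conv(O)`. -/
theorem convS_subset_convO (n : ℕ) (hn : 1 ≤ n)
    (flo fup : Fin (n + 1) → ℝ)
    (h0 : flo 0 ≤ fup 0)
    (hpos : ∀ j : Fin n, 0 ≤ fup j.succ)
    (hlo : ∀ j : Fin n, flo j.succ = -(fup j.succ))
    (d : ℝ)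
    (S : Set ((Fin n → ℝ) × (Fin (n + 1) → ℝ)))
    (hS : S = {p | (∀ j, p.1 j = 0 ∨ p.1 j = 1) ∧
      (∑ j, p.2 j) = d ∧ flo 0 ≤ p.2 0 ∧ p.2 0 ≤ fup 0 ∧
      ∀ j : Fin n, -(fup j.succ * p.1 j) ≤ p.2 j.succ ∧ p.2 j.succ ≤ fup j.succ * p.1 j})
    -- `xe x` is the extension of `x` by the convention `x₀ = 1`
    (xe : (Fin n → ℝ) → Fin (n + 1) → ℝ)
    (hxe : ∀ x, xe x = Fin.cases (motive := fun _ => ℝ) 1 x)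
    -- the finite candidate-value sets `E_j`
    (E : Fin (n + 1) → Set ℝ)
    (hE : E = Fin.cases (motive := fun _ => Set ℝ) {flo 0, fup 0}
      (fun j => {-(fup j.succ), 0, fup j.succ}))
    -- the sets `V_k`
    (V : Fin (n + 1) → Set ℝ)
    (hV : ∀ k, V k = {v | (∃ g : Fin (n + 1) → ℝ, (∀ j, j ≠ k → g j ∈ E j) ∧
        v = d - ∑ j ∈ Finset.univ.erase k, g j)} ∩ Set.Icc (flo k) (fup k))
    -- the outer-approximation set `O`
    (O : Set ((Fin n → ℝ) × (Fin (n + 1) → ℝ)))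
    (hO : O = ⋃ k : Fin (n + 1), {p | (∀ j, 0 ≤ p.1 j ∧ p.1 j ≤ 1) ∧
      (∑ j, p.2 j) = d ∧
      (∀ i : Fin (n + 1), flo i * xe p.1 i ≤ p.2 i ∧ p.2 i ≤ fup i * xe p.1 i) ∧
      p.2 k ∈ convexHull ℝ (V k) ∧ xe p.1 k = 1}) :
    convexHull ℝ S ⊆ convexHull ℝ O :=
  convS_subset_convO_general n flo fup hpos hlo d S hS xe hxe E hE V hV O hO
end

section
/- Let f̄ > 0, let m ≥ 1, and let d' = κ·f̄ for some integer κ with −m+1 ≤ κ ≤ m. Then the polytope P = {(x,f) ∈ [0,1]^m × ℝ^m : d' − f̄ ≤ ∑_{j=1}^m f_j ≤ d', and −f̄ x_j ≤ f_j ≤ f̄ x_j for all j ∈ {1,…,m}} is integral in x: every extreme point (x,f) of P satisfies x ∈ {0,1}^m. -/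
open scoped BigOperators

theorem extremePerturb {E : Type*} [AddCommGroup E] [Module ℝ E] {P : Set E} {p : E}
    (hp : p ∈ Set.extremePoints ℝ P) {v w : E} (h1 : p + v ∈ P) (h2 : p + w ∈ P)
    (hw : w = -v) : v = 0 := by
  subst hw
  have hseg : p ∈ openSegment ℝ (p + v) (p + -v) :=
    ⟨1/2, 1/2, by norm_num, by norm_num, by norm_num, by module⟩
  exact add_eq_left.mp (hp.2 h1 h2 hseg)

set_option maxHeartbeats 4000000 in
/-- the polytope of Lemma `intPolytope` is integral in `x`. -/
theorem intPolytope_integral (m : ℕ) (hm : 1 ≤ m)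
    (fbar : ℝ) (hfbar : 0 < fbar)
    (κ : ℤ) (hκ1 : -(m : ℤ) + 1 ≤ κ) (hκ2 : κ ≤ (m : ℤ))
    (d' : ℝ) (hd' : d' = (κ : ℝ) * fbar)
    (P : Set ((Fin m → ℝ) × (Fin m → ℝ)))
    (hP : P = {p | (∀ j, 0 ≤ p.1 j ∧ p.1 j ≤ 1) ∧
      d' - fbar ≤ (∑ j, p.2 j) ∧ (∑ j, p.2 j) ≤ d' ∧
      ∀ j, -(fbar * p.1 j) ≤ p.2 j ∧ p.2 j ≤ fbar * p.1 j}) :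
    ∀ p ∈ Set.extremePoints ℝ P, ∀ j, p.1 j = 0 ∨ p.1 j = 1 := by
  rintro ⟨x, f⟩ hp j
  show x j = 0 ∨ x j = 1
  by_contra hcon
  push_neg at hcon
  obtain ⟨hx0, hx1⟩ := hcon
  have hmem := hp.1
  rw [hP] at hmem
  simp only [Set.mem_setOf_eq] at hmem
  obtain ⟨hbox, hs1, hs2, hcpl⟩ := hmem
  have hxj0 : 0 < x j := lt_of_le_of_ne (hbox j).1 (Ne.symm hx0)
  have hxj1 : x j < 1 := lt_of_le_of_ne (hbox j).2 hx1
  -- membership helper, single index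
  have mem1 : ∀ a c : ℝ, 0 ≤ x j + a → x j + a ≤ 1 →
      d' - fbar ≤ (∑ i, f i) + c → (∑ i, f i) + c ≤ d' →
      -(fbar * (x j + a)) ≤ f j + c → f j + c ≤ fbar * (x j + a) →
      ((x, f) + ((Pi.single j a, Pi.single j c) : (Fin m → ℝ) × (Fin m → ℝ))) ∈ P := by
    intro a c h1 h2 h3 h4 h5 h6
    rw [hP]
    refine ⟨fun i => ?_, ?_, ?_, fun i => ?_⟩
    · by_cases hij : i = j
      · simpa [hij] using ⟨h1, h2⟩
      · simpa [Pi.single_apply, hij] using hbox i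
    · simpa [Finset.sum_add_distrib, Finset.sum_pi_single] using h3
    · simpa [Finset.sum_add_distrib, Finset.sum_pi_single] using h4
    · by_cases hij : i = j
      · simpa [hij] using ⟨h5, h6⟩
      · simpa [Pi.single_apply, hij] using hcpl i
  -- membership helper, two indices
  have mem2 : ∀ (i0 : Fin m), i0 ≠ j → ∀ a b c d : ℝ,
      0 ≤ x j + a → x j + a ≤ 1 → 0 ≤ x i0 + b → x i0 + b ≤ 1 →
      d' - fbar ≤ (∑ i, f i) + (c + d) → (∑ i, f i) + (c + d) ≤ d' →
      -(fbar * (x j + a)) ≤ f j + c → f j + c ≤ fbar * (x j + a) →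
      -(fbar * (x i0 + b)) ≤ f i0 + d → f i0 + d ≤ fbar * (x i0 + b) →
      ((x, f) + ((Pi.single j a + Pi.single i0 b, Pi.single j c + Pi.single i0 d) :
        (Fin m → ℝ) × (Fin m → ℝ))) ∈ P := by
    intro i0 hij a b c d h1 h2 h1' h2' h3 h4 h5 h6 h5' h6'
    have hji : ¬ (j = i0) := fun h => hij h.symm
    rw [hP]
    refine ⟨fun i => ?_, ?_, ?_, fun i => ?_⟩
    · by_cases h : i = j
      · simpa [Pi.single_apply, h, hji] using ⟨h1, h2⟩
      · by_cases h' : i = i0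
        · simpa [Pi.single_apply, h', hij] using ⟨h1', h2'⟩
        · simpa [Pi.single_apply, h, h'] using hbox i
    · simp only [Prod.snd_add, Pi.add_apply, Finset.sum_add_distrib, Finset.sum_pi_single', Finset.mem_univ, if_true]
      linarith
    · simp only [Prod.snd_add, Pi.add_apply, Finset.sum_add_distrib, Finset.sum_pi_single', Finset.mem_univ, if_true]
      linarith
    · by_cases h : i = j
      · simpa [Pi.single_apply, h, hji] using ⟨h5, h6⟩
      · by_cases h' : i = i0
        · simpa [Pi.single_apply, h', hij] using ⟨h5', h6'⟩
        · simpa [Pi.single_apply, h, h'] using hcpl i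
  -- extreme point consequence, single index
  have key1 : ∀ a c : ℝ,
      ((x, f) + ((Pi.single j a, Pi.single j c) : (Fin m → ℝ) × (Fin m → ℝ))) ∈ P →
      ((x, f) + ((Pi.single j (-a), Pi.single j (-c)) : (Fin m → ℝ) × (Fin m → ℝ))) ∈ P →
      a = 0 := by
    intro a c hq hr
    have hv : ((Pi.single j a, Pi.single j c) : (Fin m → ℝ) × (Fin m → ℝ)) = 0 := by
      refine extremePerturb hp hq hr ?_
      ext i <;> by_cases h : i = j <;> simp [Pi.single_apply, h]
    have := congrFun (congrArg Prod.fst hv) j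
    simpa using this
  have key2 : ∀ (i0 : Fin m), i0 ≠ j → ∀ a b c d : ℝ,
      ((x, f) + ((Pi.single j a + Pi.single i0 b, Pi.single j c + Pi.single i0 d) :
        (Fin m → ℝ) × (Fin m → ℝ))) ∈ P →
      ((x, f) + ((Pi.single j (-a) + Pi.single i0 (-b), Pi.single j (-c) + Pi.single i0 (-d)) :
        (Fin m → ℝ) × (Fin m → ℝ))) ∈ P →
      a = 0 := by
    intro i0 hij a b c d hq hr
    have hji : ¬ (j = i0) := fun h => hij h.symm
    have hv : ((Pi.single j a + Pi.single i0 b, Pi.single j c + Pi.single i0 d) :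
        (Fin m → ℝ) × (Fin m → ℝ)) = 0 := by
      refine extremePerturb hp hq hr ?_
      ext i <;> by_cases h : i = j <;> by_cases h' : i = i0 <;>
        simp [Pi.single_apply, h, h', hji]
    have := congrFun (congrArg Prod.fst hv) j
    simpa [Pi.single_apply, hji] using this
  -- Case B : the coupling constraint at j is tight
  have hB : ∀ σ : ℝ, (σ = 1 ∨ σ = -1) → f j = σ * (fbar * x j) → False := by
    intro σ hσ hfj
    have hσle : σ ≤ 1 := by rcases hσ with h | h <;> rw [h] <;> norm_num
    have hσge : -1 ≤ σ := by rcases hσ with h | h <;> rw [h] <;> norm_num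
    have hσne : σ ≠ 0 := by rcases hσ with h | h <;> rw [h] <;> norm_num
    -- Case B2 : the sum constraint is also tight
    have hB2 : ∀ κ' : ℤ, (∑ i, f i) = (κ' : ℝ) * fbar → False := by
      intro κ' hS
      -- there is another coordinate whose f-value is not a multiple of fbar
      have hexi : ∃ i, i ≠ j ∧ ∀ k : ℤ, f i ≠ (k : ℝ) * fbar := by
        by_contra hno
        push_neg at hno
        classical
        set g : Fin m → ℤ := fun i =>
          if h : ∃ k : ℤ, f i = (k : ℝ) * fbar then h.choose else 0 with hg
        have hgi : ∀ i, i ≠ j → f i = (g i : ℝ) * fbar := by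
          intro i hi
          simp only [hg]
          rw [dif_pos (hno i hi)]
          exact (hno i hi).choose_spec
        set N : ℤ := ∑ i ∈ Finset.univ.erase j, g i with hN
        have hsum : ∑ i ∈ Finset.univ.erase j, f i = (N : ℝ) * fbar := by
          rw [hN]
          push_cast
          rw [Finset.sum_mul]
          exact Finset.sum_congr rfl fun i hi => hgi i (Finset.ne_of_mem_erase hi)
        have hsplit : (∑ i ∈ Finset.univ.erase j, f i) + f j = ∑ i, f i :=
          Finset.sum_erase_add _ _ (Finset.mem_univ j)
        have hfj' : f j = ((κ' - N : ℤ) : ℝ) * fbar := by push_cast; linarith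
        have hcast : (σ * x j) * fbar = ((κ' - N : ℤ) : ℝ) * fbar := by
          rw [hfj] at hfj'
          linarith [hfj', mul_comm σ (fbar * x j), mul_assoc σ (x j) fbar,
            mul_comm (x j) fbar]
        have hM : σ * x j = ((κ' - N : ℤ) : ℝ) := mul_right_cancel₀ (ne_of_gt hfbar) hcast
        have hb1 : -1 < ((κ' - N : ℤ) : ℝ) := by rw [← hM]; nlinarith
        have hb2 : ((κ' - N : ℤ) : ℝ) < 1 := by rw [← hM]; nlinarith
        have hz : (κ' - N : ℤ) = 0 := by
          have h1 : (-1 : ℤ) < κ' - N := by exact_mod_cast hb1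
          have h2 : (κ' - N : ℤ) < 1 := by exact_mod_cast hb2
          omega
        rw [hz] at hM
        push_cast at hM
        exact (mul_ne_zero hσne (ne_of_gt hxj0)) hM
      obtain ⟨i0, hij, hi0⟩ := hexi
      have hc1 : -(fbar * x i0) ≤ f i0 := (hcpl i0).1
      have hc2 : f i0 ≤ fbar * x i0 := (hcpl i0).2
      have hne1 : f i0 ≠ fbar := fun h => hi0 1 (by rw [h]; push_cast; ring)
      have hne2 : f i0 ≠ -fbar := fun h => hi0 (-1) (by rw [h]; push_cast; ring)
      have hne0 : f i0 ≠ 0 := fun h => hi0 0 (by rw [h]; push_cast; ring)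
      -- Case B2b : coupling at i0 also tight
      have hB2b : ∀ τ : ℝ, (τ = 1 ∨ τ = -1) → f i0 = τ * (fbar * x i0) → False := by
        intro τ hτ hfi0
        have hτ1 : τ * τ = 1 := by rcases hτ with h | h <;> rw [h] <;> norm_num
        have hτle : τ ≤ 1 := by rcases hτ with h | h <;> rw [h] <;> norm_num
        have hτge : -1 ≤ τ := by rcases hτ with h | h <;> rw [h] <;> norm_num
        have hxi0pos : 0 < x i0 := by
          rcases lt_or_eq_of_le (hbox i0).1 with h | h
          · exact h
          · exact absurd (by rw [hfi0, ← h]; ring) hne0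
        have hxi0lt : x i0 < 1 := by
          rcases lt_or_eq_of_le (hbox i0).2 with h | h
          · exact h
          · exfalso
            rcases hτ with h' | h' <;> rw [h'] at hfi0
            · exact hne1 (by rw [hfi0, h]; ring)
            · exact hne2 (by rw [hfi0, h]; ring)
        obtain ⟨ε, hεpos, hε1, hε2, hε3, hε4⟩ :
            ∃ ε : ℝ, 0 < ε ∧ ε ≤ x j ∧ ε ≤ 1 - x j ∧ ε ≤ x i0 ∧ ε ≤ 1 - x i0 :=
          ⟨min (min (x j) (1 - x j)) (min (x i0) (1 - x i0)),
            lt_min (lt_min hxj0 (by linarith)) (lt_min hxi0pos (by linarith)),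
            le_trans (min_le_left _ _) (min_le_left _ _),
            le_trans (min_le_left _ _) (min_le_right _ _),
            le_trans (min_le_right _ _) (min_le_left _ _),
            le_trans (min_le_right _ _) (min_le_right _ _)⟩
        have hστ : σ * τ = 1 ∨ σ * τ = -1 := by
          rcases hσ with h | h <;> rcases hτ with h' | h' <;> rw [h, h'] <;> norm_num
        have hp1 : σ * (τ * ε) ≤ ε := by rcases hστ with h | h <;> nlinarith [hεpos.le]
        have hp2 : -ε ≤ σ * (τ * ε) := by rcases hστ with h | h <;> nlinarith [hεpos.le]
        have hXj : (0:ℝ) ≤ x j + ε := by linarith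
        have hXj' : (0:ℝ) ≤ x j + -ε := by linarith
        have hXi : (0:ℝ) ≤ x i0 + -(σ * (τ * ε)) := by linarith
        have hXi' : (0:ℝ) ≤ x i0 + -(-(σ * (τ * ε))) := by linarith
        have heqj : f j + σ * (fbar * ε) = σ * (fbar * (x j + ε)) := by rw [hfj]; ring
        have heqj' : f j + -(σ * (fbar * ε)) = σ * (fbar * (x j + -ε)) := by rw [hfj]; ring
        have heqi : f i0 + -(σ * (fbar * ε)) = τ * (fbar * (x i0 + -(σ * (τ * ε)))) := by
          rw [hfi0]; linear_combination (σ * fbar * ε) * hτ1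
        have heqi' : f i0 + -(-(σ * (fbar * ε))) =
            τ * (fbar * (x i0 + -(-(σ * (τ * ε))))) := by
          rw [hfi0]; linear_combination (-(σ * fbar * ε)) * hτ1
        refine absurd (key2 i0 hij ε (-(σ * (τ * ε))) (σ * (fbar * ε)) (-(σ * (fbar * ε)))
          ?_ ?_) (ne_of_gt hεpos)
        · refine mem2 i0 hij _ _ _ _ (by linarith) (by linarith) hXi (by linarith)
            (by linarith [hs1]) (by linarith [hs2]) ?_ ?_ ?_ ?_
          · nlinarith [mul_nonneg (show (0:ℝ) ≤ 1 + σ by linarith)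
              (mul_nonneg hfbar.le hXj)]
          · nlinarith [mul_nonneg (show (0:ℝ) ≤ 1 - σ by linarith)
              (mul_nonneg hfbar.le hXj)]
          · nlinarith [mul_nonneg (show (0:ℝ) ≤ 1 + τ by linarith)
              (mul_nonneg hfbar.le hXi)]
          · nlinarith [mul_nonneg (show (0:ℝ) ≤ 1 - τ by linarith)
              (mul_nonneg hfbar.le hXi)]
        · refine mem2 i0 hij _ _ _ _ (by linarith) (by linarith) hXi' (by linarith)
            (by linarith [hs1]) (by linarith [hs2]) ?_ ?_ ?_ ?_
          · nlinarith [mul_nonneg (show (0:ℝ) ≤ 1 + σ by linarith)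
              (mul_nonneg hfbar.le hXj')]
          · nlinarith [mul_nonneg (show (0:ℝ) ≤ 1 - σ by linarith)
              (mul_nonneg hfbar.le hXj')]
          · nlinarith [mul_nonneg (show (0:ℝ) ≤ 1 + τ by linarith)
              (mul_nonneg hfbar.le hXi')]
          · nlinarith [mul_nonneg (show (0:ℝ) ≤ 1 - τ by linarith)
              (mul_nonneg hfbar.le hXi')]
      -- Case B2a : coupling at i0 is slack on both sides
      rcases lt_or_eq_of_le hc2 with h2 | h2
      · rcases lt_or_eq_of_le hc1 with h1 | h1
        · -- strict on both sides
          obtain ⟨ε, hεpos, hε1, hε2, hεa, hεb⟩ :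
              ∃ ε : ℝ, 0 < ε ∧ ε ≤ x j ∧ ε ≤ 1 - x j ∧
                fbar * ε ≤ f i0 + fbar * x i0 ∧ fbar * ε ≤ fbar * x i0 - f i0 := by
            refine ⟨min (min (x j) (1 - x j))
              (min ((f i0 + fbar * x i0) / fbar) ((fbar * x i0 - f i0) / fbar)),
              lt_min (lt_min hxj0 (by linarith))
                (lt_min (div_pos (by linarith) hfbar) (div_pos (by linarith) hfbar)),
              le_trans (min_le_left _ _) (min_le_left _ _),
              le_trans (min_le_left _ _) (min_le_right _ _), ?_, ?_⟩
            · have := (le_div_iff₀ hfbar).mp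
                (le_trans (min_le_right _ _) (min_le_left _ _) :
                  min (min (x j) (1 - x j))
                    (min ((f i0 + fbar * x i0) / fbar) ((fbar * x i0 - f i0) / fbar)) ≤
                    (f i0 + fbar * x i0) / fbar)
              nlinarith
            · have := (le_div_iff₀ hfbar).mp
                (le_trans (min_le_right _ _) (min_le_right _ _) :
                  min (min (x j) (1 - x j))
                    (min ((f i0 + fbar * x i0) / fbar) ((fbar * x i0 - f i0) / fbar)) ≤
                    (fbar * x i0 - f i0) / fbar)
              nlinarith
          have hfe : (0:ℝ) ≤ fbar * ε := mul_nonneg hfbar.le hεpos.le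
          have hq1 : σ * (fbar * ε) ≤ fbar * ε := by
            nlinarith [mul_nonneg (show (0:ℝ) ≤ 1 - σ by linarith) hfe]
          have hq2 : -(fbar * ε) ≤ σ * (fbar * ε) := by
            nlinarith [mul_nonneg (show (0:ℝ) ≤ 1 + σ by linarith) hfe]
          have hXj : (0:ℝ) ≤ x j + ε := by linarith
          have hXj' : (0:ℝ) ≤ x j + -ε := by linarith
          have heqj : f j + σ * (fbar * ε) = σ * (fbar * (x j + ε)) := by rw [hfj]; ring
          have heqj' : f j + -(σ * (fbar * ε)) = σ * (fbar * (x j + -ε)) := by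
            rw [hfj]; ring
          refine absurd (key2 i0 hij ε 0 (σ * (fbar * ε)) (-(σ * (fbar * ε)))
            ?_ ?_) (ne_of_gt hεpos)
          · refine mem2 i0 hij _ _ _ _ (by linarith) (by linarith)
              (by linarith [(hbox i0).1]) (by linarith [(hbox i0).2])
              (by linarith [hs1]) (by linarith [hs2]) ?_ ?_ ?_ ?_
            · nlinarith [mul_nonneg (show (0:ℝ) ≤ 1 + σ by linarith)
                (mul_nonneg hfbar.le hXj)]
            · nlinarith [mul_nonneg (show (0:ℝ) ≤ 1 - σ by linarith)
                (mul_nonneg hfbar.le hXj)]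
            · nlinarith
            · nlinarith
          · refine mem2 i0 hij _ _ _ _ (by linarith) (by linarith)
              (by linarith [(hbox i0).1]) (by linarith [(hbox i0).2])
              (by linarith [hs1]) (by linarith [hs2]) ?_ ?_ ?_ ?_
            · nlinarith [mul_nonneg (show (0:ℝ) ≤ 1 + σ by linarith)
                (mul_nonneg hfbar.le hXj')]
            · nlinarith [mul_nonneg (show (0:ℝ) ≤ 1 - σ by linarith)
                (mul_nonneg hfbar.le hXj')]
            · nlinarith
            · nlinarith
        · exact hB2b (-1) (Or.inr rfl) (by rw [← h1]; ring)
      · exact hB2b 1 (Or.inl rfl) (by rw [h2]; ring)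
    -- sum constraint cases
    rcases lt_or_eq_of_le hs2 with hU2 | hU2
    · rcases lt_or_eq_of_le hs1 with hL2 | hL2
      · -- Case B1 : sum strictly slack on both sides
        obtain ⟨ε, hεpos, hε1, hε2, hεa, hεb⟩ :
            ∃ ε : ℝ, 0 < ε ∧ ε ≤ x j ∧ ε ≤ 1 - x j ∧
              fbar * ε ≤ (∑ i, f i) - (d' - fbar) ∧ fbar * ε ≤ d' - ∑ i, f i := by
          refine ⟨min (min (x j) (1 - x j))
            (min (((∑ i, f i) - (d' - fbar)) / fbar) ((d' - ∑ i, f i) / fbar)),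
            lt_min (lt_min hxj0 (by linarith))
              (lt_min (div_pos (by linarith) hfbar) (div_pos (by linarith) hfbar)),
            le_trans (min_le_left _ _) (min_le_left _ _),
            le_trans (min_le_left _ _) (min_le_right _ _), ?_, ?_⟩
          · have := (le_div_iff₀ hfbar).mp
              (le_trans (min_le_right _ _) (min_le_left _ _) :
                min (min (x j) (1 - x j))
                  (min (((∑ i, f i) - (d' - fbar)) / fbar) ((d' - ∑ i, f i) / fbar)) ≤
                  ((∑ i, f i) - (d' - fbar)) / fbar)
            nlinarith
          · have := (le_div_iff₀ hfbar).mp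
              (le_trans (min_le_right _ _) (min_le_right _ _) :
                min (min (x j) (1 - x j))
                  (min (((∑ i, f i) - (d' - fbar)) / fbar) ((d' - ∑ i, f i) / fbar)) ≤
                  (d' - ∑ i, f i) / fbar)
            nlinarith
        have hfe : (0:ℝ) ≤ fbar * ε := mul_nonneg hfbar.le hεpos.le
        have hq1 : σ * (fbar * ε) ≤ fbar * ε := by
          nlinarith [mul_nonneg (show (0:ℝ) ≤ 1 - σ by linarith) hfe]
        have hq2 : -(fbar * ε) ≤ σ * (fbar * ε) := by
          nlinarith [mul_nonneg (show (0:ℝ) ≤ 1 + σ by linarith) hfe]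
        have hXj : (0:ℝ) ≤ x j + ε := by linarith
        have hXj' : (0:ℝ) ≤ x j + -ε := by linarith
        have heqj : f j + σ * (fbar * ε) = σ * (fbar * (x j + ε)) := by rw [hfj]; ring
        have heqj' : f j + -(σ * (fbar * ε)) = σ * (fbar * (x j + -ε)) := by
          rw [hfj]; ring
        refine absurd (key1 ε (σ * (fbar * ε)) ?_ ?_) (ne_of_gt hεpos)
        · refine mem1 _ _ (by linarith) (by linarith) (by linarith) (by linarith) ?_ ?_
          · nlinarith [mul_nonneg (show (0:ℝ) ≤ 1 + σ by linarith)
              (mul_nonneg hfbar.le hXj)]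
          · nlinarith [mul_nonneg (show (0:ℝ) ≤ 1 - σ by linarith)
              (mul_nonneg hfbar.le hXj)]
        · refine mem1 _ _ (by linarith) (by linarith) (by linarith) (by linarith) ?_ ?_
          · nlinarith [mul_nonneg (show (0:ℝ) ≤ 1 + σ by linarith)
              (mul_nonneg hfbar.le hXj')]
          · nlinarith [mul_nonneg (show (0:ℝ) ≤ 1 - σ by linarith)
              (mul_nonneg hfbar.le hXj')]
      · exact hB2 (κ - 1) (by rw [← hL2, hd']; push_cast; ring)
    · exact hB2 κ (by rw [hU2, hd'])
  -- top-level case split on the coupling constraint at j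
  rcases lt_or_eq_of_le (hcpl j).1 with hL | hL
  · rcases lt_or_eq_of_le (hcpl j).2 with hU | hU
    · -- Case A : coupling at j strictly slack on both sides
      obtain ⟨ε, hεpos, hε1, hε2, hεa, hεb⟩ :
          ∃ ε : ℝ, 0 < ε ∧ ε ≤ x j ∧ ε ≤ 1 - x j ∧
            fbar * ε ≤ f j + fbar * x j ∧ fbar * ε ≤ fbar * x j - f j := by
        refine ⟨min (min (x j) (1 - x j))
          (min ((f j + fbar * x j) / fbar) ((fbar * x j - f j) / fbar)),
          lt_min (lt_min hxj0 (by linarith))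
            (lt_min (div_pos (by linarith) hfbar) (div_pos (by linarith) hfbar)),
          le_trans (min_le_left _ _) (min_le_left _ _),
          le_trans (min_le_left _ _) (min_le_right _ _), ?_, ?_⟩
        · have := (le_div_iff₀ hfbar).mp
            (le_trans (min_le_right _ _) (min_le_left _ _) :
              min (min (x j) (1 - x j))
                (min ((f j + fbar * x j) / fbar) ((fbar * x j - f j) / fbar)) ≤
                (f j + fbar * x j) / fbar)
          nlinarith
        · have := (le_div_iff₀ hfbar).mp
            (le_trans (min_le_right _ _) (min_le_right _ _) :
              min (min (x j) (1 - x j))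
                (min ((f j + fbar * x j) / fbar) ((fbar * x j - f j) / fbar)) ≤
                (fbar * x j - f j) / fbar)
          nlinarith
      have hfe : (0:ℝ) ≤ fbar * ε := mul_nonneg hfbar.le hεpos.le
      refine absurd (key1 ε 0 ?_ ?_) (ne_of_gt hεpos)
      · refine mem1 _ _ (by linarith) (by linarith) (by linarith) (by linarith) ?_ ?_
        · nlinarith
        · nlinarith
      · refine mem1 _ _ (by linarith) (by linarith) (by linarith) (by linarith) ?_ ?_
        · nlinarith
        · nlinarith
    · exact hB 1 (Or.inl rfl) (by rw [hU]; ring)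
  · exact hB (-1) (Or.inr rfl) (by rw [← hL]; ring)
end

section
/- Let f̄ > 0 and 0 ≤ d < f̄, and fix k ∈ {1,…,n}. Then every extreme point (x,f) of the polytope {(x,f) ∈ [0,1]^n × ℝ^{n+1} : f_0 = 0, ∑_{j=1}^n f_j = d, −f̄ x_j ≤ f_j ≤ f̄ x_j for all j ∈ {1,…,n}, −f̄ + d ≤ f_k ≤ d, x_k = 1} satisfies x ∈ {0,1}^n. -/
open scoped BigOperators

private lemma eps_aux (fbar M : ℝ) (hf : 0 < fbar) (hM : 0 < M) :
    ∃ ε : ℝ, 0 < ε ∧ ε ≤ M ∧ fbar * ε ≤ M := by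
  refine ⟨M / (2 * (fbar + 1)), div_pos hM (by linarith), ?_, ?_⟩
  · exact div_le_self hM.le (by linarith)
  · rw [mul_comm, div_mul_eq_mul_div, div_le_iff₀ (by linarith)]
    nlinarith

set_option maxHeartbeats 2000000 in
/-- each disjunct of the outer approximation (in the special case
`f̲₀ = f̄₀ = 0`, common capacity `f̄`, demand `0 ≤ d < f̄`) is integral in `x`. -/
theorem disjunct_integral (n : ℕ) (hn : 1 ≤ n)
    (fbar d : ℝ) (hfbar : 0 < fbar) (hd0 : 0 ≤ d) (hd : d < fbar)
    (k : Fin n)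
    (P : Set ((Fin n → ℝ) × (Fin (n + 1) → ℝ)))
    (hP : P = {p | (∀ j, 0 ≤ p.1 j ∧ p.1 j ≤ 1) ∧
      p.2 0 = 0 ∧ (∑ j : Fin n, p.2 j.succ) = d ∧
      (∀ j : Fin n, -(fbar * p.1 j) ≤ p.2 j.succ ∧ p.2 j.succ ≤ fbar * p.1 j) ∧
      -fbar + d ≤ p.2 k.succ ∧ p.2 k.succ ≤ d ∧ p.1 k = 1}) :
    ∀ p ∈ Set.extremePoints ℝ P, ∀ j, p.1 j = 0 ∨ p.1 j = 1 := by
  rintro ⟨x, f⟩ hp j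
  by_contra hcon
  push_neg at hcon
  obtain ⟨hxne0, hxne1⟩ := hcon
  obtain ⟨hmem, hext⟩ := hp
  rw [hP] at hmem
  simp only [Set.mem_setOf_eq] at hmem
  obtain ⟨hbox, hf0, hsum, hcap, hklo, hkhi, hxk⟩ := hmem
  have hX0 : 0 < x j := lt_of_le_of_ne (hbox j).1 (Ne.symm hxne0)
  have hX1 : x j < 1 := lt_of_le_of_ne (hbox j).2 hxne1
  have hjk : j ≠ k := fun h => hxne1 (by rw [h]; exact hxk)
  have key : ∀ (vx : Fin n → ℝ) (vf : Fin (n + 1) → ℝ),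
      ((fun i => x i + vx i, fun i => f i + vf i) :
        (Fin n → ℝ) × (Fin (n + 1) → ℝ)) ∈ P →
      ((fun i => x i - vx i, fun i => f i - vf i) :
        (Fin n → ℝ) × (Fin (n + 1) → ℝ)) ∈ P →
      vx j = 0 := by
    intro vx vf h1 h2
    have hseg : ((x, f) : (Fin n → ℝ) × (Fin (n + 1) → ℝ)) ∈
        openSegment ℝ (fun i => x i + vx i, fun i => f i + vf i)
          (fun i => x i - vx i, fun i => f i - vf i) := by
      refine ⟨1/2, 1/2, by norm_num, by norm_num, by norm_num, ?_⟩
      refine Prod.ext ?_ ?_ <;> funext i <;>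
        simp [Prod.smul_fst, Prod.smul_snd, Pi.add_apply, Pi.smul_apply, smul_eq_mul] <;> ring
    have h := (hext h1 h2 hseg)
    have h' := congrArg (fun q => q.1 j) h
    simp only at h'
    linarith
  -- master perturbation lemma
  have pert : ∀ (m : Fin n), m ≠ j → ∀ (ε u a : ℝ), ε ≠ 0 →
      0 ≤ x j + ε → x j + ε ≤ 1 → 0 ≤ x j - ε → x j - ε ≤ 1 →
      -(fbar * (x j + ε)) ≤ f j.succ + a → f j.succ + a ≤ fbar * (x j + ε) →
      -(fbar * (x j - ε)) ≤ f j.succ - a → f j.succ - a ≤ fbar * (x j - ε) →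
      0 ≤ x m + u → x m + u ≤ 1 → 0 ≤ x m - u → x m - u ≤ 1 →
      -(fbar * (x m + u)) ≤ f m.succ - a → f m.succ - a ≤ fbar * (x m + u) →
      -(fbar * (x m - u)) ≤ f m.succ + a → f m.succ + a ≤ fbar * (x m - u) →
      (m = k → u = 0 ∧ d - fbar ≤ f k.succ - a ∧ f k.succ - a ≤ d ∧
        d - fbar ≤ f k.succ + a ∧ f k.succ + a ≤ d) →
      False := by
    intro m hmj ε u a hε hxj1 hxj2 hxj3 hxj4 hcj1 hcj2 hcj3 hcj4
      hxm1 hxm2 hxm3 hxm4 hcm1 hcm2 hcm3 hcm4 hk'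
    set vx : Fin n → ℝ := fun i => if i = j then ε else if i = m then u else 0 with hvx
    set vf : Fin (n + 1) → ℝ :=
      fun i => if i = j.succ then a else if i = m.succ then -a else 0 with hvf
    have hvfs : ∀ i : Fin n, vf i.succ = if i = j then a else if i = m then -a else 0 := by
      intro i
      simp only [hvf, Fin.succ_inj]
    have hvxj : vx j = ε := by simp [hvx]
    have hvxm : vx m = u := by simp [hvx, hmj]
    have hvxo : ∀ i, i ≠ j → i ≠ m → vx i = 0 := fun i h1 h2 => by simp [hvx, h1, h2]
    have hvfj : vf j.succ = a := by rw [hvfs]; simp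
    have hvfm : vf m.succ = -a := by rw [hvfs]; simp [hmj]
    have hvfo : ∀ i : Fin n, i ≠ j → i ≠ m → vf i.succ = 0 := fun i h1 h2 => by
      rw [hvfs]; simp [h1, h2]
    have hvf0 : vf 0 = 0 := by
      simp only [hvf]
      rw [if_neg (Fin.succ_ne_zero j).symm, if_neg (Fin.succ_ne_zero m).symm]
    have hsum0 : ∑ i : Fin n, vf i.succ = 0 := by
      have h1 : ∀ i : Fin n, vf i.succ =
          (if i = j then a else 0) + (if i = m then -a else 0) := by
        intro i
        rw [hvfs]
        by_cases h1 : i = j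
        · subst h1; simp [Ne.symm hmj]
        · by_cases h2 : i = m
          · subst h2; simp [hmj]
          · simp [h1, h2]
      rw [Finset.sum_congr rfl (fun i _ => h1 i), Finset.sum_add_distrib]
      simp
    have hmems : ∀ s : ℝ, s = 1 ∨ s = -1 →
        ((fun i => x i + s * vx i, fun i => f i + s * vf i) :
          (Fin n → ℝ) × (Fin (n + 1) → ℝ)) ∈ P := by
      intro s hs
      rw [hP]
      simp only [Set.mem_setOf_eq]
      refine ⟨?_, ?_, ?_, ?_, ?_, ?_, ?_⟩
      · intro i
        rcases eq_or_ne i j with rfl | h1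
        · rw [hvxj]
          rcases hs with rfl | rfl <;> constructor <;> linarith
        · rcases eq_or_ne i m with rfl | h2
          · rw [hvxm]
            rcases hs with rfl | rfl <;> constructor <;> linarith
          · rw [hvxo i h1 h2]; simp only [mul_zero, add_zero]
            exact hbox i
      · rw [hvf0]; simp only [mul_zero, add_zero]; exact hf0
      · rw [Finset.sum_add_distrib, hsum, ← Finset.mul_sum, hsum0, mul_zero, add_zero]
      · intro i
        rcases eq_or_ne i j with rfl | h1
        · rw [hvxj, hvfj]
          rcases hs with rfl | rfl <;> constructor <;> linarith
        · rcases eq_or_ne i m with rfl | h2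
          · rw [hvxm, hvfm]
            rcases hs with rfl | rfl <;> constructor <;> linarith
          · rw [hvxo i h1 h2, hvfo i h1 h2]; simp only [mul_zero, add_zero]
            exact hcap i
      · rcases eq_or_ne m k with rfl | hmk
        · rw [hvfm]
          have h := hk' rfl
          rcases hs with rfl | rfl <;> linarith [h.2.1, h.2.2.2.1]
        · rw [hvfo k (Ne.symm hjk) (Ne.symm hmk)]; simp only [mul_zero, add_zero]
          exact hklo
      · rcases eq_or_ne m k with rfl | hmk
        · rw [hvfm]
          have h := hk' rfl
          rcases hs with rfl | rfl <;> linarith [h.2.2.1, h.2.2.2.2]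
        · rw [hvfo k (Ne.symm hjk) (Ne.symm hmk)]; simp only [mul_zero, add_zero]
          exact hkhi
      · rcases eq_or_ne m k with rfl | hmk
        · rw [hvxm, (hk' rfl).1]; simp only [mul_zero, add_zero]; exact hxk
        · rw [hvxo k (Ne.symm hjk) (Ne.symm hmk)]; simp only [mul_zero, add_zero]; exact hxk
    have hm1 := hmems 1 (Or.inl rfl)
    have hm2 := hmems (-1) (Or.inr rfl)
    simp only [one_mul, neg_one_mul, ← sub_eq_add_neg] at hm1 hm2
    have h := key vx vf hm1 hm2
    rw [hvxj] at h
    exact hε h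
  have noint : ∀ c : ℤ, x j = (c : ℝ) → False := by
    intro c hc
    have h1 : (0:ℝ) < (c:ℝ) := hc ▸ hX0
    have h2 : ((c:ℝ)) < 1 := hc ▸ hX1
    have h3 : (0:ℤ) < c := by exact_mod_cast h1
    have h4 : c < 1 := by exact_mod_cast h2
    omega
  by_cases hjslack : -(fbar * x j) < f j.succ ∧ f j.succ < fbar * x j
  · -- Case 1 : strict slack at j, perturb x j alone
    obtain ⟨ε, hεpos, hεM', hfe⟩ := eps_aux fbar
      (min (min (x j) (1 - x j)) (min (fbar * x j - f j.succ) (f j.succ + fbar * x j)))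
      hfbar
      (by simp only [lt_min_iff]
          exact ⟨⟨hX0, by linarith⟩, ⟨by linarith [hjslack.2], by linarith [hjslack.1]⟩⟩)
    have hfε0 : (0:ℝ) ≤ fbar * ε := mul_nonneg hfbar.le hεpos.le
    have hM1 : ε ≤ x j := le_trans hεM' (le_trans (min_le_left _ _) (min_le_left _ _))
    have hM2 : ε ≤ 1 - x j := le_trans hεM' (le_trans (min_le_left _ _) (min_le_right _ _))
    have hM3 : fbar * ε ≤ fbar * x j - f j.succ :=
      le_trans hfe (le_trans (min_le_right _ _) (min_le_left _ _))
    have hM4 : fbar * ε ≤ f j.succ + fbar * x j :=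
      le_trans hfe (le_trans (min_le_right _ _) (min_le_right _ _))
    exact pert k (Ne.symm hjk) ε 0 0 (ne_of_gt hεpos)
      (by linarith) (by linarith) (by linarith) (by linarith)
      (by nlinarith [mul_pos hfbar hεpos]) (by nlinarith [mul_pos hfbar hεpos])
      (by nlinarith [mul_pos hfbar hεpos]) (by nlinarith [mul_pos hfbar hεpos])
      (by rw [hxk]; norm_num) (by rw [hxk]; norm_num)
      (by rw [hxk]; norm_num) (by rw [hxk]; norm_num)
      (by rw [hxk]; linarith) (by rw [hxk]; linarith)
      (by rw [hxk]; linarith) (by rw [hxk]; linarith)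
      (fun _ => ⟨rfl, by linarith, by linarith, by linarith, by linarith⟩)
  · -- Case 2 : f j is at a capacity bound
    push_neg at hjslack
    have hsgn : ∃ s : ℝ, (s = 1 ∨ s = -1) ∧ f j.succ = s * (fbar * x j) := by
      rcases lt_or_ge (-(fbar * x j)) (f j.succ) with h | h
      · exact ⟨1, Or.inl rfl, by linarith [hjslack h, (hcap j).2]⟩
      · exact ⟨-1, Or.inr rfl, by linarith [(hcap j).1]⟩
    obtain ⟨s, hs, hF⟩ := hsgn
    by_cases hkslack : d - fbar < f k.succ ∧ f k.succ < d
    · -- compensate through coordinate k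
      obtain ⟨ε, hεpos, hεM', hfe⟩ := eps_aux fbar
        (min (min (x j) (1 - x j)) (min (f k.succ - (d - fbar)) (d - f k.succ)))
        hfbar
        (by simp only [lt_min_iff]
            exact ⟨⟨hX0, by linarith⟩, ⟨by linarith [hkslack.1], by linarith [hkslack.2]⟩⟩)
      have hfε0 : (0:ℝ) ≤ fbar * ε := mul_nonneg hfbar.le hεpos.le
      have hM1 : ε ≤ x j := le_trans hεM' (le_trans (min_le_left _ _) (min_le_left _ _))
      have hM2 : ε ≤ 1 - x j := le_trans hεM' (le_trans (min_le_left _ _) (min_le_right _ _))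
      have hM3 : fbar * ε ≤ f k.succ - (d - fbar) :=
        le_trans hfe (le_trans (min_le_right _ _) (min_le_left _ _))
      have hM4 : fbar * ε ≤ d - f k.succ :=
        le_trans hfe (le_trans (min_le_right _ _) (min_le_right _ _))
      have hxje1 : (0:ℝ) ≤ x j + ε := by linarith
      have hxje2 : (0:ℝ) ≤ x j - ε := by linarith
      exact pert k (Ne.symm hjk) ε 0 (s * (fbar * ε)) (ne_of_gt hεpos)
        (by linarith) (by linarith) (by linarith) (by linarith)
        (by rcases hs with rfl | rfl <;>
          nlinarith [mul_nonneg hfbar.le hxje1, mul_nonneg hfbar.le hxje2])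
        (by rcases hs with rfl | rfl <;>
          nlinarith [mul_nonneg hfbar.le hxje1, mul_nonneg hfbar.le hxje2])
        (by rcases hs with rfl | rfl <;>
          nlinarith [mul_nonneg hfbar.le hxje1, mul_nonneg hfbar.le hxje2])
        (by rcases hs with rfl | rfl <;>
          nlinarith [mul_nonneg hfbar.le hxje1, mul_nonneg hfbar.le hxje2])
        (by rw [hxk]; norm_num) (by rw [hxk]; norm_num)
        (by rw [hxk]; norm_num) (by rw [hxk]; norm_num)
        (by rw [hxk]; rcases hs with rfl | rfl <;> linarith)
        (by rw [hxk]; rcases hs with rfl | rfl <;> linarith)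
        (by rw [hxk]; rcases hs with rfl | rfl <;> linarith)
        (by rw [hxk]; rcases hs with rfl | rfl <;> linarith)
        (fun _ => ⟨rfl,
          by rcases hs with rfl | rfl <;> linarith,
          by rcases hs with rfl | rfl <;> linarith,
          by rcases hs with rfl | rfl <;> linarith,
          by rcases hs with rfl | rfl <;> linarith⟩)
    · push_neg at hkslack
      have hkval : f k.succ = d - fbar ∨ f k.succ = d := by
        rcases lt_or_ge (d - fbar) (f k.succ) with h | h
        · exact Or.inr (le_antisymm hkhi (hkslack h))
        · exact Or.inl (le_antisymm h (by linarith))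
      by_cases hmslack : ∃ m, m ≠ j ∧ m ≠ k ∧
          -(fbar * x m) < f m.succ ∧ f m.succ < fbar * x m
      · -- compensate through a slack coordinate m ≠ j, k
        obtain ⟨m, hmj, hmk, hsl1, hsl2⟩ := hmslack
        obtain ⟨ε, hεpos, hεM', hfe⟩ := eps_aux fbar
          (min (min (x j) (1 - x j)) (min (f m.succ + fbar * x m) (fbar * x m - f m.succ)))
          hfbar
          (by simp only [lt_min_iff]
              exact ⟨⟨hX0, by linarith⟩, ⟨by linarith, by linarith⟩⟩)
        have hfε0 : (0:ℝ) ≤ fbar * ε := mul_nonneg hfbar.le hεpos.le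
        have hM1 : ε ≤ x j := le_trans hεM' (le_trans (min_le_left _ _) (min_le_left _ _))
        have hM2 : ε ≤ 1 - x j := le_trans hεM' (le_trans (min_le_left _ _) (min_le_right _ _))
        have hM3 : fbar * ε ≤ f m.succ + fbar * x m :=
          le_trans hfe (le_trans (min_le_right _ _) (min_le_left _ _))
        have hM4 : fbar * ε ≤ fbar * x m - f m.succ :=
          le_trans hfe (le_trans (min_le_right _ _) (min_le_right _ _))
        have hxje1 : (0:ℝ) ≤ x j + ε := by linarith
        have hxje2 : (0:ℝ) ≤ x j - ε := by linarith
        exact pert m hmj ε 0 (s * (fbar * ε)) (ne_of_gt hεpos)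
          (by linarith) (by linarith) (by linarith) (by linarith)
          (by rcases hs with rfl | rfl <;>
            nlinarith [mul_nonneg hfbar.le hxje1, mul_nonneg hfbar.le hxje2])
          (by rcases hs with rfl | rfl <;>
            nlinarith [mul_nonneg hfbar.le hxje1, mul_nonneg hfbar.le hxje2])
          (by rcases hs with rfl | rfl <;>
            nlinarith [mul_nonneg hfbar.le hxje1, mul_nonneg hfbar.le hxje2])
          (by rcases hs with rfl | rfl <;>
            nlinarith [mul_nonneg hfbar.le hxje1, mul_nonneg hfbar.le hxje2])
          (by linarith [(hbox m).1]) (by linarith [(hbox m).2])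
          (by linarith [(hbox m).1]) (by linarith [(hbox m).2])
          (by rcases hs with rfl | rfl <;> linarith [(hcap m).1, (hcap m).2])
          (by rcases hs with rfl | rfl <;> linarith [(hcap m).1, (hcap m).2])
          (by rcases hs with rfl | rfl <;> linarith [(hcap m).1, (hcap m).2])
          (by rcases hs with rfl | rfl <;> linarith [(hcap m).1, (hcap m).2])
          (fun h => absurd h hmk)
      · push_neg at hmslack
        by_cases hmfrac : ∃ m, m ≠ j ∧ m ≠ k ∧ 0 < x m ∧ x m < 1
        · -- a fractional tight coordinate m ≠ j, k : pair it with j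
          obtain ⟨m, hmj, hmk, hm0, hm1⟩ := hmfrac
          have htgn : ∃ t : ℝ, (t = 1 ∨ t = -1) ∧ f m.succ = t * (fbar * x m) := by
            rcases lt_or_ge (-(fbar * x m)) (f m.succ) with h | h
            · exact ⟨1, Or.inl rfl, by linarith [hmslack m hmj hmk h, (hcap m).2]⟩
            · exact ⟨-1, Or.inr rfl, by linarith [(hcap m).1]⟩
          obtain ⟨t, ht, hFm⟩ := htgn
          obtain ⟨ε, hεpos, hεM', hfe⟩ := eps_aux fbar
            (min (min (x j) (1 - x j)) (min (x m) (1 - x m)))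
            hfbar
            (by simp only [lt_min_iff]
                exact ⟨⟨hX0, by linarith⟩, ⟨hm0, by linarith⟩⟩)
          have hfε0 : (0:ℝ) ≤ fbar * ε := mul_nonneg hfbar.le hεpos.le
          have hM1 : ε ≤ x j := le_trans hεM' (le_trans (min_le_left _ _) (min_le_left _ _))
          have hM2 : ε ≤ 1 - x j := le_trans hεM' (le_trans (min_le_left _ _) (min_le_right _ _))
          have hM3 : ε ≤ x m := le_trans hεM' (le_trans (min_le_right _ _) (min_le_left _ _))
          have hM4 : ε ≤ 1 - x m := le_trans hεM' (le_trans (min_le_right _ _) (min_le_right _ _))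
          have hxje1 : (0:ℝ) ≤ x j + ε := by linarith
          have hxje2 : (0:ℝ) ≤ x j - ε := by linarith
          have hxme1 : (0:ℝ) ≤ x m + ε := by linarith
          have hxme2 : (0:ℝ) ≤ x m - ε := by linarith
          exact pert m hmj ε (-(s * t * ε)) (s * (fbar * ε)) (ne_of_gt hεpos)
            (by linarith) (by linarith) (by linarith) (by linarith)
            (by rcases hs with rfl | rfl <;>
              nlinarith [mul_nonneg hfbar.le hxje1, mul_nonneg hfbar.le hxje2])
            (by rcases hs with rfl | rfl <;>
              nlinarith [mul_nonneg hfbar.le hxje1, mul_nonneg hfbar.le hxje2])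
            (by rcases hs with rfl | rfl <;>
              nlinarith [mul_nonneg hfbar.le hxje1, mul_nonneg hfbar.le hxje2])
            (by rcases hs with rfl | rfl <;>
              nlinarith [mul_nonneg hfbar.le hxje1, mul_nonneg hfbar.le hxje2])
            (by rcases hs with rfl | rfl <;> rcases ht with rfl | rfl <;> norm_num <;> linarith)
            (by rcases hs with rfl | rfl <;> rcases ht with rfl | rfl <;> norm_num <;> linarith)
            (by rcases hs with rfl | rfl <;> rcases ht with rfl | rfl <;> norm_num <;> linarith)
            (by rcases hs with rfl | rfl <;> rcases ht with rfl | rfl <;> norm_num <;> linarith)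
            (by rcases hs with rfl | rfl <;> rcases ht with rfl | rfl <;>
              nlinarith [mul_nonneg hfbar.le hxme1, mul_nonneg hfbar.le hxme2])
            (by rcases hs with rfl | rfl <;> rcases ht with rfl | rfl <;>
              nlinarith [mul_nonneg hfbar.le hxme1, mul_nonneg hfbar.le hxme2])
            (by rcases hs with rfl | rfl <;> rcases ht with rfl | rfl <;>
              nlinarith [mul_nonneg hfbar.le hxme1, mul_nonneg hfbar.le hxme2])
            (by rcases hs with rfl | rfl <;> rcases ht with rfl | rfl <;>
              nlinarith [mul_nonneg hfbar.le hxme1, mul_nonneg hfbar.le hxme2])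
            (fun h => absurd h hmk)
        · -- all other coordinates are integral and tight : integrality contradiction
          push_neg at hmfrac
          have hall : ∀ m : Fin n, m ≠ j → m ≠ k → ∃ z : ℤ, f m.succ = fbar * z := by
            intro m hmj hmk
            rcases eq_or_lt_of_le (hbox m).1 with h0 | h0
            · refine ⟨0, ?_⟩
              have h1 := (hcap m).1
              have h2 := (hcap m).2
              rw [← h0] at h1 h2
              push_cast
              linarith
            · have h1 : x m = 1 := le_antisymm (hbox m).2 (hmfrac m hmj hmk h0)
              rcases lt_or_ge (-(fbar * x m)) (f m.succ) with h2 | h2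
              · have h3 := hmslack m hmj hmk h2
                have h4 := (hcap m).2
                rw [h1] at h3 h4
                exact ⟨1, by push_cast; linarith⟩
              · have h4 := (hcap m).1
                rw [h1] at h2 h4
                exact ⟨-1, by push_cast; linarith⟩
          have hks : k ∈ Finset.univ.erase j :=
            Finset.mem_erase.2 ⟨Ne.symm hjk, Finset.mem_univ k⟩
          have e1 : f j.succ + ∑ i ∈ Finset.univ.erase j, f i.succ = ∑ i : Fin n, f i.succ :=
            Finset.add_sum_erase _ (fun i => f i.succ) (Finset.mem_univ j)
          have e2 : f k.succ + ∑ i ∈ (Finset.univ.erase j).erase k, f i.succ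
              = ∑ i ∈ Finset.univ.erase j, f i.succ :=
            Finset.add_sum_erase _ (fun i => f i.succ) hks
          have hrest : ∃ z : ℤ, ∑ i ∈ (Finset.univ.erase j).erase k, f i.succ = fbar * z := by
            refine Finset.sum_induction _ (fun r => ∃ z : ℤ, r = fbar * z)
              (fun a b ha hb => ?_) ⟨0, by simp⟩ (fun i hi => ?_)
            · obtain ⟨za, hza⟩ := ha
              obtain ⟨zb, hzb⟩ := hb
              exact ⟨za + zb, by push_cast [hza, hzb]; ring⟩
            · rw [Finset.mem_erase, Finset.mem_erase] at hi
              exact hall i hi.2.1 hi.1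
          obtain ⟨z, hz⟩ := hrest
          have htot : f j.succ + f k.succ + fbar * z = d := by
            rw [← hz, ← hsum, ← e1, ← e2]; ring
          rcases hkval with hkv | hkv
          · -- f k = d - fbar : s * x j + z - 1 = 0
            have h1 : fbar * (s * x j + (z:ℝ) - 1) = 0 := by
              rw [hkv, hF] at htot
              ring_nf
              ring_nf at htot
              linarith
            have h2 : s * x j + (z:ℝ) - 1 = 0 := by
              rcases mul_eq_zero.1 h1 with h | h
              · exact absurd h hfbar.ne'
              · exact h
            rcases hs with rfl | rfl
            · exact noint (1 - z) (by push_cast; linarith)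
            · exact noint (z - 1) (by push_cast; linarith)
          · -- f k = d : s * x j + z = 0
            have h1 : fbar * (s * x j + (z:ℝ)) = 0 := by
              rw [hkv, hF] at htot
              ring_nf
              ring_nf at htot
              linarith
            have h2 : s * x j + (z:ℝ) = 0 := by
              rcases mul_eq_zero.1 h1 with h | h
              · exact absurd h hfbar.ne'
              · exact h
            rcases hs with rfl | rfl
            · exact noint (-z) (by push_cast; linarith)
            · exact noint z (by push_cast; linarith)
end

section
/- Assume f̲_0 = f̄_0 = 0, f̄_j = f̄ for all j ∈ {1,…,n} for a common f̄ > 0, and 0 ≤ d < f̄. Define V_k = {d − ∑_{j ∈ {0,…,n}\{k}} g_j : g_j ∈ E_j for all j ≠ k} ∩ [f̲_k, f̄_k] with E_0 = {0} and E_j = {−f̄, 0, f̄} for j ∈ {1,…,n}, and (with the convention x_0 = 1) O = ⋃_{k=0}^n {(x,f) ∈ [0,1]^n × ℝ^{n+1} : ∑_{j=0}^n f_j = d, f̲_j x_j ≤ f_j ≤ f̄_j x_j for j ∈ {0,…,n}, f_k ∈ conv(V_k), x_k = 1}. Then conv(O) = conv(S). -/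
open scoped BigOperators
open Set

namespace ConvOS7

variable {n : ℕ}

/-- extended x vector -/
def Xe (x : Fin n → ℝ) : Fin (n + 1) → ℝ := Fin.cases 1 x

def Eset (fbar : ℝ) : Fin (n + 1) → Set ℝ := Fin.cases {0} fun _ => {-fbar, 0, fbar}

def Vset (fbar d : ℝ) (k : Fin (n + 1)) : Set ℝ :=
  {v | ∃ g : Fin (n + 1) → ℝ, (∀ j, j ≠ k → g j ∈ Eset fbar j) ∧
      v = d - ∑ j ∈ Finset.univ.erase k, g j} ∩
    Set.Icc (Fin.cases 0 (fun _ => -fbar) k) (Fin.cases 0 (fun _ => fbar) k)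

def Sset (n : ℕ) (fbar d : ℝ) : Set ((Fin n → ℝ) × (Fin (n + 1) → ℝ)) :=
  {p | (∀ j, p.1 j = 0 ∨ p.1 j = 1) ∧ (∑ j, p.2 j) = d ∧ p.2 0 = 0 ∧
    ∀ j : Fin n, -(fbar * p.1 j) ≤ p.2 j.succ ∧ p.2 j.succ ≤ fbar * p.1 j}

def Okset (n : ℕ) (fbar d : ℝ) (k : Fin (n + 1)) : Set ((Fin n → ℝ) × (Fin (n + 1) → ℝ)) :=
  {p | (∀ j, 0 ≤ p.1 j ∧ p.1 j ≤ 1) ∧ (∑ j, p.2 j) = d ∧ p.2 0 = 0 ∧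
    (∀ j : Fin n, -(fbar * p.1 j) ≤ p.2 j.succ ∧ p.2 j.succ ≤ fbar * p.1 j) ∧
    p.2 k ∈ convexHull ℝ (Vset fbar d k) ∧ Xe p.1 k = 1}

def Kx (n : ℕ) (fbar d : ℝ) (x : Fin n → ℝ) : Set ((Fin n → ℝ) × (Fin (n + 1) → ℝ)) :=
  {p | p.1 = x ∧ (∑ j, p.2 j) = d ∧ p.2 0 = 0 ∧
    ∀ j : Fin n, -(fbar * x j) ≤ p.2 j.succ ∧ p.2 j.succ ≤ fbar * x j}

def Aset (n : ℕ) (fbar d : ℝ) : Set ((Fin n → ℝ) × (Fin (n + 1) → ℝ)) :=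
  Sset n fbar d ∩ {p | ∃ k, (∀ i, i ≠ k → p.2 i ∈ Eset fbar i) ∧
    p.2 k ∈ Vset fbar d k ∧ Xe p.1 k = 1}

lemma Eset_finite (fbar : ℝ) (i : Fin (n + 1)) : (Eset fbar i).Finite := by
  induction i using Fin.cases with
  | zero => exact Set.finite_singleton _
  | succ j => exact (Set.finite_singleton _).insert _ |>.insert _

lemma Vset_finite (fbar d : ℝ) (k : Fin (n + 1)) : (Vset fbar d k).Finite := by
  have himg : Vset fbar d k ⊆
      (fun c : Fin (n + 1) → ℝ => d - ∑ j ∈ Finset.univ.erase k, c j) ''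
        (Set.pi Set.univ fun j => insert (0:ℝ) (Eset fbar j)) := by
    rintro v ⟨⟨g, hg, rfl⟩, -⟩
    refine ⟨Function.update g k 0, fun j _ => ?_, ?_⟩
    · by_cases hj : j = k
      · subst hj; simp
      · rw [Function.update_of_ne hj]; exact Set.mem_insert_of_mem _ (hg j hj)
    · have hsum : ∑ j ∈ Finset.univ.erase k, Function.update g k 0 j
          = ∑ j ∈ Finset.univ.erase k, g j :=
        Finset.sum_congr rfl fun j hj =>
          Function.update_of_ne (Finset.ne_of_mem_erase hj) _ _
      show d - ∑ j ∈ Finset.univ.erase k, Function.update g k 0 j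
          = d - ∑ j ∈ Finset.univ.erase k, g j
      rw [hsum]
  exact ((Set.Finite.pi fun j => (Eset_finite fbar j).insert (0:ℝ)).image _).subset himg

lemma Aset_finite (n : ℕ) (fbar d : ℝ) : (Aset n fbar d).Finite := by
  have h : Aset n fbar d ⊆
      (Set.pi Set.univ fun _ : Fin n => ({0, 1} : Set ℝ)) ×ˢ
        (Set.pi Set.univ fun i => Eset fbar i ∪ Vset fbar d i) := by
    rintro p ⟨hS, k, hE, hV, -⟩
    refine ⟨fun j _ => hS.1 j, fun i _ => ?_⟩
    by_cases hik : i = k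
    · subst hik; exact Or.inr hV
    · exact Or.inl (hE i hik)
  exact (((Set.Finite.pi fun _ => (Set.finite_singleton _).insert _).prod
    (Set.Finite.pi fun i => (Eset_finite fbar i).union (Vset_finite fbar d i)))).subset h

lemma Aset_subset_Sset (n : ℕ) (fbar d : ℝ) : Aset n fbar d ⊆ Sset n fbar d :=
  fun _ hp => hp.1

lemma not_extremePoint {E : Type*} [AddCommGroup E] [Module ℝ E] {s : Set E} {p q r : E}
    (hq : q ∈ s) (hr : r ∈ s) (hmid : q + r = p + p) (hne : q ≠ p) : p ∉ s.extremePoints ℝ := by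
  rintro ⟨hp, h⟩
  have hseg : p ∈ openSegment ℝ q r := by
    refine ⟨1/2, 1/2, by norm_num, by norm_num, by norm_num, ?_⟩
    rw [← smul_add, hmid]
    module
  exact hne (h hq hr hseg)

lemma convexHull_finite_eq_Icc {V : Set ℝ} (hfin : V.Finite) (hne : V.Nonempty) :
    convexHull ℝ V = Set.Icc (sInf V) (sSup V) := by
  apply subset_antisymm
  · exact convexHull_min
      (fun v hv => ⟨csInf_le hfin.bddBelow hv, le_csSup hfin.bddAbove hv⟩) (convex_Icc _ _)
  · rw [← segment_eq_Icc (csInf_le_csSup hne hfin.bddBelow hfin.bddAbove)]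
    exact segment_subset_convexHull (hne.csInf_mem hfin) (hne.csSup_mem hfin)

@[simp] lemma Xe_zero (x : Fin n → ℝ) : Xe x 0 = 1 := rfl

@[simp] lemma Xe_succ (x : Fin n → ℝ) (j : Fin n) : Xe x j.succ = x j := by
  simp [Xe]

lemma convex_Kx (fbar d : ℝ) (x : Fin n → ℝ) : Convex ℝ (Kx n fbar d x) := by
  rintro p ⟨hp1, hp2, hp3, hp4⟩ q ⟨hq1, hq2, hq3, hq4⟩ a b ha hb hab
  have key1 : ∀ j, (a • p + b • q).1 j = a * p.1 j + b * q.1 j := fun j => by simp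
  have key2 : ∀ i, (a • p + b • q).2 i = a * p.2 i + b * q.2 i := fun i => by simp
  refine ⟨?_, ?_, ?_, fun j => ?_⟩
  · funext j; rw [key1 j, hp1, hq1, ← add_mul, hab, one_mul]
  · rw [Finset.sum_congr rfl fun i _ => key2 i, Finset.sum_add_distrib,
      ← Finset.mul_sum, ← Finset.mul_sum, hp2, hq2, ← add_mul, hab, one_mul]
  · rw [key2 0, hp3, hq3]; ring
  · rw [key2 j.succ]
    have e1 : a * (fbar * x j) + b * (fbar * x j) = fbar * x j := by
      rw [← add_mul, hab, one_mul]
    constructor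
    · nlinarith [mul_le_mul_of_nonneg_left (hp4 j).1 ha,
        mul_le_mul_of_nonneg_left (hq4 j).1 hb]
    · nlinarith [mul_le_mul_of_nonneg_left (hp4 j).2 ha,
        mul_le_mul_of_nonneg_left (hq4 j).2 hb]

lemma convex_Okset (fbar d : ℝ) (k : Fin (n + 1)) : Convex ℝ (Okset n fbar d k) := by
  rintro p ⟨hp1, hp2, hp3, hp4, hp5, hp6⟩ q ⟨hq1, hq2, hq3, hq4, hq5, hq6⟩ a b ha hb hab
  have key1 : ∀ j, (a • p + b • q).1 j = a * p.1 j + b * q.1 j := fun j => by simp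
  have key2 : ∀ i, (a • p + b • q).2 i = a * p.2 i + b * q.2 i := fun i => by simp
  refine ⟨fun j => ?_, ?_, ?_, fun j => ?_, ?_, ?_⟩
  · rw [key1 j]
    constructor
    · nlinarith [mul_le_mul_of_nonneg_left (hp1 j).1 ha,
        mul_le_mul_of_nonneg_left (hq1 j).1 hb]
    · nlinarith [mul_le_mul_of_nonneg_left (hp1 j).2 ha,
        mul_le_mul_of_nonneg_left (hq1 j).2 hb]
  · rw [Finset.sum_congr rfl fun i _ => key2 i, Finset.sum_add_distrib,
      ← Finset.mul_sum, ← Finset.mul_sum, hp2, hq2, ← add_mul, hab, one_mul]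
  · rw [key2 0, hp3, hq3]; ring
  · rw [key2 j.succ, key1 j]
    constructor
    · nlinarith [mul_le_mul_of_nonneg_left (hp4 j).1 ha,
        mul_le_mul_of_nonneg_left (hq4 j).1 hb]
    · nlinarith [mul_le_mul_of_nonneg_left (hp4 j).2 ha,
        mul_le_mul_of_nonneg_left (hq4 j).2 hb]
  · rw [key2 k]
    have := (convex_convexHull ℝ (Vset fbar d k)) hp5 hq5 ha hb hab
    simpa using this
  · induction k using Fin.cases with
    | zero => simp
    | succ j =>
      rw [Xe_succ, key1 j]
      rw [Xe_succ] at hp6 hq6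
      rw [hp6, hq6, mul_one, mul_one, hab]

lemma subset_box {fbar : ℝ} (hfbar : 0 < fbar) (p : (Fin n → ℝ) × (Fin (n + 1) → ℝ))
    (hx : ∀ j, 0 ≤ p.1 j ∧ p.1 j ≤ 1) (h0 : p.2 0 = 0)
    (hf : ∀ j : Fin n, -(fbar * p.1 j) ≤ p.2 j.succ ∧ p.2 j.succ ≤ fbar * p.1 j) :
    p ∈ (Set.pi Set.univ fun _ : Fin n => Set.Icc (0:ℝ) 1) ×ˢ
      (Set.pi Set.univ fun _ : Fin (n + 1) => Set.Icc (-fbar) fbar) := by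
  refine ⟨fun j _ => hx j, fun i _ => ?_⟩
  induction i using Fin.cases with
  | zero => rw [h0]; constructor <;> linarith
  | succ j =>
    have h1 : fbar * p.1 j ≤ fbar := by
      nlinarith [(hx j).2]
    exact ⟨by linarith [(hf j).1], by linarith [(hf j).2]⟩

lemma isCompact_box (fbar : ℝ) :
    IsCompact ((Set.pi Set.univ fun _ : Fin n => Set.Icc (0:ℝ) 1) ×ˢ
      (Set.pi Set.univ fun _ : Fin (n + 1) => Set.Icc (-fbar) fbar)) :=
  (isCompact_univ_pi fun _ => isCompact_Icc).prod (isCompact_univ_pi fun _ => isCompact_Icc)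

lemma cont_sum : Continuous fun p : (Fin n → ℝ) × (Fin (n + 1) → ℝ) => ∑ i, p.2 i :=
  continuous_finset_sum _ fun i _ => (continuous_apply i).comp continuous_snd

lemma cont_coord (i : Fin (n + 1)) :
    Continuous fun p : (Fin n → ℝ) × (Fin (n + 1) → ℝ) => p.2 i :=
  (continuous_apply i).comp continuous_snd

lemma cont_Xe (k : Fin (n + 1)) :
    Continuous fun p : (Fin n → ℝ) × (Fin (n + 1) → ℝ) => Xe p.1 k := by
  induction k using Fin.cases with
  | zero => simpa using continuous_const
  | succ j =>
    simp only [Xe_succ]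
    exact (continuous_apply j).comp continuous_fst

lemma isCompact_Kx {fbar : ℝ} (d : ℝ) (hfbar : 0 < fbar) (x : Fin n → ℝ)
    (hx : ∀ j, 0 ≤ x j ∧ x j ≤ 1) : IsCompact (Kx n fbar d x) := by
  have hclosed : IsClosed (Kx n fbar d x) := by
    have heq : Kx n fbar d x = {p | p.1 = x} ∩ {p | (∑ i, p.2 i) = d} ∩ {p | p.2 0 = 0} ∩
        ⋂ j : Fin n, ({p | -(fbar * x j) ≤ p.2 j.succ} ∩ {p | p.2 j.succ ≤ fbar * x j}) := by
      ext p
      simp only [Kx, Set.mem_setOf_eq, Set.mem_inter_iff, Set.mem_iInter]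
      tauto
    rw [heq]
    refine (((isClosed_eq continuous_fst continuous_const).inter
      (isClosed_eq cont_sum continuous_const)).inter
      (isClosed_eq (cont_coord 0) continuous_const)).inter
      (isClosed_iInter fun j => IsClosed.inter ?_ ?_)
    · exact isClosed_le continuous_const (cont_coord j.succ)
    · exact isClosed_le (cont_coord j.succ) continuous_const
  refine (isCompact_box fbar).of_isClosed_subset hclosed ?_
  rintro p ⟨hp1, hp2, hp3, hp4⟩
  exact subset_box hfbar p (fun j => hp1 ▸ hx j) hp3 (by rw [hp1]; exact hp4)

lemma isCompact_Okset {fbar : ℝ} (d : ℝ) (hfbar : 0 < fbar) (k : Fin (n + 1)) :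
    IsCompact (Okset n fbar d k) := by
  have hclosed : IsClosed (Okset n fbar d k) := by
    have heq : Okset n fbar d k =
        (⋂ j : Fin n, ({p | 0 ≤ p.1 j} ∩ {p | p.1 j ≤ 1})) ∩
        {p | (∑ i, p.2 i) = d} ∩ {p | p.2 0 = 0} ∩
        (⋂ j : Fin n, ({p | -(fbar * p.1 j) ≤ p.2 j.succ} ∩ {p | p.2 j.succ ≤ fbar * p.1 j})) ∩
        {p | p.2 k ∈ convexHull ℝ (Vset fbar d k)} ∩ {p | Xe p.1 k = 1} := by
      ext p
      simp only [Okset, Set.mem_setOf_eq, Set.mem_inter_iff, Set.mem_iInter]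
      tauto
    rw [heq]
    have c1 : ∀ j : Fin n, Continuous fun p : (Fin n → ℝ) × (Fin (n + 1) → ℝ) => p.1 j :=
      fun j => (continuous_apply j).comp continuous_fst
    refine (((((isClosed_iInter fun j => (isClosed_le continuous_const (c1 j)).inter
      (isClosed_le (c1 j) continuous_const)).inter
      (isClosed_eq cont_sum continuous_const)).inter
      (isClosed_eq (cont_coord 0) continuous_const)).inter
      (isClosed_iInter fun j => IsClosed.inter ?_ ?_)).inter ?_).inter
      (isClosed_eq (cont_Xe k) continuous_const)
    · exact isClosed_le (continuous_const.mul (c1 j)).neg (cont_coord j.succ)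
    · exact isClosed_le (cont_coord j.succ) (continuous_const.mul (c1 j))
    · exact (((Vset_finite fbar d k).isCompact_convexHull ℝ).isClosed).preimage (cont_coord k)
  refine (isCompact_box fbar).of_isClosed_subset hclosed ?_
  rintro p ⟨hp1, hp2, hp3, hp4, hp5, hp6⟩
  exact subset_box hfbar p hp1 hp3 hp4


lemma extremePoints_Kx_subset_Aset {fbar d : ℝ} (hfbar : 0 < fbar)
    (x : Fin n → ℝ) (hx : ∀ j, x j = 0 ∨ x j = 1) :
    (Kx n fbar d x).extremePoints ℝ ⊆ Aset n fbar d := by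
  classical
  intro p hp
  obtain ⟨hp1, hp2, hp3, hp4⟩ := hp.1
  have hxle : ∀ j, 0 ≤ x j ∧ x j ≤ 1 := by
    intro j; rcases hx j with h | h <;> rw [h] <;> norm_num
  -- no two distinct free coordinates
  have hpair : ∀ j1 j2 : Fin n, j1 ≠ j2 →
      (-(fbar * x j1) < p.2 j1.succ ∧ p.2 j1.succ < fbar * x j1) →
      (-(fbar * x j2) < p.2 j2.succ ∧ p.2 j2.succ < fbar * x j2) → False := by
    rintro j1 j2 hne ⟨h1l, h1u⟩ ⟨h2l, h2u⟩
    set ε := min (min (fbar * x j1 - p.2 j1.succ) (p.2 j1.succ + fbar * x j1))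
        (min (fbar * x j2 - p.2 j2.succ) (p.2 j2.succ + fbar * x j2)) with hεdef
    have hε : 0 < ε := lt_min (lt_min (by linarith) (by linarith))
      (lt_min (by linarith) (by linarith))
    have hε1 : ε ≤ fbar * x j1 - p.2 j1.succ := le_trans (min_le_left _ _) (min_le_left _ _)
    have hε2 : ε ≤ p.2 j1.succ + fbar * x j1 := le_trans (min_le_left _ _) (min_le_right _ _)
    have hε3 : ε ≤ fbar * x j2 - p.2 j2.succ := le_trans (min_le_right _ _) (min_le_left _ _)
    have hε4 : ε ≤ p.2 j2.succ + fbar * x j2 := le_trans (min_le_right _ _) (min_le_right _ _)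
    have hss : j1.succ ≠ j2.succ := fun h => hne (Fin.succ_injective _ h)
    set w : Fin (n + 1) → ℝ := Pi.single j1.succ ε + Pi.single j2.succ (-ε) with hwdef
    have hw1 : w j1.succ = ε := by
      rw [hwdef, Pi.add_apply, Pi.single_eq_same, Pi.single_eq_of_ne hss, add_zero]
    have hw2 : w j2.succ = -ε := by
      rw [hwdef, Pi.add_apply, Pi.single_eq_same, Pi.single_eq_of_ne hss.symm, zero_add]
    have hw0 : ∀ i, i ≠ j1.succ → i ≠ j2.succ → w i = 0 := by
      intro i h1 h2
      rw [hwdef, Pi.add_apply, Pi.single_eq_of_ne h1, Pi.single_eq_of_ne h2, add_zero]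
    have hwsum : ∑ i, w i = 0 := by
      rw [hwdef]
      simp [Finset.sum_add_distrib, Finset.sum_pi_single']
    have hbounds : ∀ s : ℝ, -1 ≤ s → s ≤ 1 → ∀ j : Fin n,
        -(fbar * x j) ≤ p.2 j.succ + s * w j.succ ∧ p.2 j.succ + s * w j.succ ≤ fbar * x j := by
      intro s hs1 hs2 j
      by_cases hja : j = j1
      · subst hja
        rw [hw1]
        have h1 : s * ε ≤ ε := by nlinarith
        have h2 : -ε ≤ s * ε := by nlinarith
        constructor <;> linarith
      · by_cases hjb : j = j2
        · subst hjb
          rw [hw2]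
          have h1 : s * -ε ≤ ε := by nlinarith
          have h2 : -ε ≤ s * -ε := by nlinarith
          constructor <;> linarith
        · rw [hw0 j.succ (fun h => hja (Fin.succ_injective _ h))
            (fun h => hjb (Fin.succ_injective _ h)), mul_zero, add_zero]
          exact hp4 j
    have hmemq : ((p.1, p.2 + w) : (Fin n → ℝ) × (Fin (n + 1) → ℝ)) ∈ Kx n fbar d x := by
      refine ⟨hp1, ?_, ?_, fun j => ?_⟩
      · show ∑ i, (p.2 i + w i) = d
        rw [Finset.sum_add_distrib, hp2, hwsum, add_zero]
      · show p.2 0 + w 0 = 0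
        rw [hw0 0 (Ne.symm (Fin.succ_ne_zero _)) (Ne.symm (Fin.succ_ne_zero _)), hp3, add_zero]
      · show -(fbar * x j) ≤ p.2 j.succ + w j.succ ∧ p.2 j.succ + w j.succ ≤ fbar * x j
        have := hbounds 1 (by norm_num) (by norm_num) j
        simpa using this
    have hmemr : ((p.1, p.2 - w) : (Fin n → ℝ) × (Fin (n + 1) → ℝ)) ∈ Kx n fbar d x := by
      refine ⟨hp1, ?_, ?_, fun j => ?_⟩
      · show ∑ i, (p.2 i - w i) = d
        rw [Finset.sum_sub_distrib, hp2, hwsum, sub_zero]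
      · show p.2 0 - w 0 = 0
        rw [hw0 0 (Ne.symm (Fin.succ_ne_zero _)) (Ne.symm (Fin.succ_ne_zero _)), hp3, sub_zero]
      · show -(fbar * x j) ≤ p.2 j.succ - w j.succ ∧ p.2 j.succ - w j.succ ≤ fbar * x j
        have := hbounds (-1) (by norm_num) (by norm_num) j
        constructor <;> linarith [this.1, this.2]
    refine not_extremePoint hmemq hmemr ?_ ?_ hp
    · refine Prod.ext_iff.mpr ⟨rfl, ?_⟩
      show (p.2 + w) + (p.2 - w) = p.2 + p.2
      abel
    · intro h
      have h2 := congrFun (congrArg Prod.snd h) j1.succ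
      have : p.2 j1.succ + w j1.succ = p.2 j1.succ := h2
      rw [hw1] at this
      linarith
  -- endpoints are grid values
  have hnotfree_imp : ∀ j : Fin n, ¬(-(fbar * x j) < p.2 j.succ ∧ p.2 j.succ < fbar * x j) →
      p.2 j.succ = -(fbar * x j) ∨ p.2 j.succ = fbar * x j := by
    intro j hj
    rcases hp4 j with ⟨hl, hu⟩
    by_contra hcon
    push_neg at hcon
    exact hj ⟨lt_of_le_of_ne hl (Ne.symm hcon.1), lt_of_le_of_ne hu hcon.2⟩
  have hEndE : ∀ j : Fin n, (p.2 j.succ = -(fbar * x j) ∨ p.2 j.succ = fbar * x j) →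
      p.2 j.succ ∈ Eset fbar j.succ := by
    intro j hj
    have hEs : Eset fbar j.succ = {-fbar, 0, fbar} := by simp [Eset]
    rw [hEs]
    rcases hx j with h0 | h1
    · rcases hj with h | h <;> rw [h, h0, mul_zero] <;> simp
    · rcases hj with h | h <;> rw [h, h1, mul_one] <;> simp
  have hE0 : p.2 0 ∈ Eset fbar (0 : Fin (n + 1)) := by simp [Eset, hp3]
  have build : ∀ k : Fin (n + 1), (∀ i, i ≠ k → p.2 i ∈ Eset fbar i) →
      p.2 k ∈ Set.Icc (Fin.cases (motive := fun _ => ℝ) 0 (fun _ => -fbar) k)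
        (Fin.cases (motive := fun _ => ℝ) 0 (fun _ => fbar) k) →
      Xe x k = 1 → p ∈ Aset n fbar d := by
    intro k hEk hIcc hXk
    have hsumk : p.2 k = d - ∑ j ∈ Finset.univ.erase k, p.2 j := by
      have h := Finset.sum_erase_add Finset.univ p.2 (Finset.mem_univ k)
      rw [hp2] at h
      linarith
    refine ⟨⟨fun j => by rw [hp1]; exact hx j, hp2, hp3, fun j => by rw [hp1]; exact hp4 j⟩,
      k, hEk, ⟨⟨p.2, hEk, hsumk⟩, hIcc⟩, by rw [hp1]; exact hXk⟩
  by_cases hfree : ∃ j0 : Fin n, -(fbar * x j0) < p.2 j0.succ ∧ p.2 j0.succ < fbar * x j0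
  · obtain ⟨j0, hj0⟩ := hfree
    have hxj0 : x j0 = 1 := by
      rcases hx j0 with h | h
      · exfalso
        rw [h, mul_zero] at hj0
        rcases hj0 with ⟨h1, h2⟩
        linarith
      · exact h
    apply build j0.succ
    · intro i hik
      rcases Fin.eq_zero_or_eq_succ i with rfl | ⟨j, rfl⟩
      · exact hE0
      · have hjj0 : j ≠ j0 := fun h => hik (by rw [h])
        exact hEndE j (hnotfree_imp j (fun hf => hpair j j0 hjj0 hf hj0))
    · simp only [Fin.cases_succ]
      have h := hp4 j0
      rw [hxj0, mul_one] at h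
      exact ⟨by linarith [h.1], h.2⟩
    · rw [Xe_succ, hxj0]
  · by_cases hone : ∃ j1 : Fin n, x j1 = 1
    · obtain ⟨j1, hxj1⟩ := hone
      apply build j1.succ
      · intro i hik
        rcases Fin.eq_zero_or_eq_succ i with rfl | ⟨j, rfl⟩
        · exact hE0
        · exact hEndE j (hnotfree_imp j (fun hf => hfree ⟨j, hf⟩))
      · simp only [Fin.cases_succ]
        have h := hp4 j1
        rw [hxj1, mul_one] at h
        exact ⟨by linarith [h.1], h.2⟩
      · rw [Xe_succ, hxj1]
    · have hx0 : ∀ j, x j = 0 := fun j => (hx j).resolve_right (fun h => hone ⟨j, h⟩)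
      have hf0 : ∀ j : Fin n, p.2 j.succ = 0 := by
        intro j
        have h := hp4 j
        rw [hx0 j, mul_zero] at h
        linarith [h.1, h.2]
      apply build 0
      · intro i hik
        rcases Fin.eq_zero_or_eq_succ i with rfl | ⟨j, rfl⟩
        · exact absurd rfl hik
        · have hEs : Eset fbar j.succ = {-fbar, 0, fbar} := by simp [Eset]
          rw [hEs, hf0 j]
          simp
      · simp only [Fin.cases_zero]
        rw [hp3]
        simp
      · rfl


set_option maxHeartbeats 2000000 in
lemma extremePoints_Okset_subset_Sset {fbar d : ℝ} (hfbar : 0 < fbar) (k : Fin (n + 1)) :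
    (Okset n fbar d k).extremePoints ℝ ⊆ Sset n fbar d := by
  classical
  intro p hp
  obtain ⟨hp1, hp2, hp3, hp4, hp5, hp6⟩ := hp.1
  refine ⟨?_, hp2, hp3, hp4⟩
  by_contra hcon
  push_neg at hcon
  obtain ⟨js, hjs0, hjs1⟩ := hcon
  have hfrac : 0 < p.1 js ∧ p.1 js < 1 :=
    ⟨lt_of_le_of_ne (hp1 js).1 (Ne.symm hjs0), lt_of_le_of_ne (hp1 js).2 hjs1⟩
  -- if k = j'.succ then j' is not js and p.1 j' = 1
  have hkne : ∀ j' : Fin n, k = j'.succ → p.1 j' = 1 ∧ j' ≠ js := by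
    intro j' hk
    have h1 : p.1 j' = 1 := by
      have := hp6
      rw [hk, Xe_succ] at this
      exact this
    exact ⟨h1, fun h => hjs1 (h ▸ h1)⟩
  -- generic perturbation principle
  have hperturb : ∀ (wx : Fin n → ℝ) (wf : Fin (n + 1) → ℝ),
      (∀ j, 0 ≤ p.1 j + wx j ∧ p.1 j + wx j ≤ 1) →
      (∀ j, 0 ≤ p.1 j - wx j ∧ p.1 j - wx j ≤ 1) →
      (∑ i, wf i = 0) → (wf 0 = 0) →
      (∀ j : Fin n, -(fbar * (p.1 j + wx j)) ≤ p.2 j.succ + wf j.succ ∧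
        p.2 j.succ + wf j.succ ≤ fbar * (p.1 j + wx j)) →
      (∀ j : Fin n, -(fbar * (p.1 j - wx j)) ≤ p.2 j.succ - wf j.succ ∧
        p.2 j.succ - wf j.succ ≤ fbar * (p.1 j - wx j)) →
      (p.2 k + wf k ∈ convexHull ℝ (Vset fbar d k)) →
      (p.2 k - wf k ∈ convexHull ℝ (Vset fbar d k)) →
      (∀ j' : Fin n, k = j'.succ → wx j' = 0) →
      ¬(wx = 0 ∧ wf = 0) → False := by
    intro wx wf hxp hxm hsum h0 hfp hfm hkp hkm hwxk hne
    have hXe : ∀ (s : ℝ), Xe (p.1 + s • wx) k = 1 := by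
      intro s
      rcases Fin.eq_zero_or_eq_succ k with rfl | ⟨j', hk⟩
      · rfl
      · rw [hk, Xe_succ]
        show p.1 j' + s * wx j' = 1
        rw [hwxk j' hk, mul_zero, add_zero]
        exact (hkne j' hk).1
    have hq : ((p.1 + wx, p.2 + wf) : (Fin n → ℝ) × (Fin (n + 1) → ℝ)) ∈ Okset n fbar d k := by
      refine ⟨hxp, ?_, ?_, hfp, ?_, ?_⟩
      · show ∑ i, (p.2 i + wf i) = d
        rw [Finset.sum_add_distrib, hp2, hsum, add_zero]
      · show p.2 0 + wf 0 = 0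
        rw [h0, hp3, add_zero]
      · exact hkp
      · have := hXe 1
        rwa [one_smul] at this
    have hr : ((p.1 - wx, p.2 - wf) : (Fin n → ℝ) × (Fin (n + 1) → ℝ)) ∈ Okset n fbar d k := by
      refine ⟨hxm, ?_, ?_, hfm, ?_, ?_⟩
      · show ∑ i, (p.2 i - wf i) = d
        rw [Finset.sum_sub_distrib, hp2, hsum, sub_zero]
      · show p.2 0 - wf 0 = 0
        rw [h0, hp3, sub_zero]
      · exact hkm
      · have := hXe (-1)
        rwa [neg_one_smul, ← sub_eq_add_neg] at this
    refine not_extremePoint hq hr ?_ ?_ hp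
    · refine Prod.ext_iff.mpr ⟨?_, ?_⟩
      · show (p.1 + wx) + (p.1 - wx) = p.1 + p.1
        abel
      · show (p.2 + wf) + (p.2 - wf) = p.2 + p.2
        abel
    · intro h
      apply hne
      constructor
      · have h1 := congrArg Prod.fst h
        have : p.1 + wx = p.1 := h1
        rwa [add_eq_left] at this
      · have h2 := congrArg Prod.snd h
        have : p.2 + wf = p.2 := h2
        rwa [add_eq_left] at this
  -- Step 1: every fractional coordinate is tight
  have htight : ∀ j : Fin n, 0 < p.1 j → p.1 j < 1 →
      p.2 j.succ = -(fbar * p.1 j) ∨ p.2 j.succ = fbar * p.1 j := by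
    intro j hj0 hj1
    by_contra hc
    push_neg at hc
    have hl : -(fbar * p.1 j) < p.2 j.succ := lt_of_le_of_ne (hp4 j).1 (Ne.symm hc.1)
    have hu : p.2 j.succ < fbar * p.1 j := lt_of_le_of_ne (hp4 j).2 hc.2
    set ε := min (min (p.1 j) (1 - p.1 j))
      (min ((fbar * p.1 j - p.2 j.succ) / fbar) ((p.2 j.succ + fbar * p.1 j) / fbar)) with hεdef
    have hε : 0 < ε := lt_min (lt_min hj0 (by linarith))
      (lt_min (div_pos (by linarith) hfbar) (div_pos (by linarith) hfbar))
    have hεa : ε ≤ p.1 j := le_trans (min_le_left _ _) (min_le_left _ _)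
    have hεb : ε ≤ 1 - p.1 j := le_trans (min_le_left _ _) (min_le_right _ _)
    have hεc : fbar * ε ≤ fbar * p.1 j - p.2 j.succ := by
      have h1 : ε ≤ (fbar * p.1 j - p.2 j.succ) / fbar :=
        le_trans (min_le_right _ _) (min_le_left _ _)
      rw [le_div_iff₀ hfbar] at h1
      linarith
    have hεd : fbar * ε ≤ p.2 j.succ + fbar * p.1 j := by
      have h1 : ε ≤ (p.2 j.succ + fbar * p.1 j) / fbar :=
        le_trans (min_le_right _ _) (min_le_right _ _)
      rw [le_div_iff₀ hfbar] at h1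
      linarith
    have hfε : 0 ≤ fbar * ε := mul_nonneg hfbar.le hε.le
    refine hperturb (Pi.single j ε) 0 ?_ ?_ (by simp) (by simp) ?_ ?_
      (by simpa using hp5) (by simpa using hp5) ?_ ?_
    · intro j2
      by_cases h : j2 = j
      · subst h
        rw [Pi.single_eq_same]
        exact ⟨by linarith, by linarith⟩
      · rw [Pi.single_eq_of_ne h, add_zero]
        exact hp1 j2
    · intro j2
      by_cases h : j2 = j
      · subst h
        rw [Pi.single_eq_same]
        exact ⟨by linarith, by linarith⟩
      · rw [Pi.single_eq_of_ne h, sub_zero]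
        exact hp1 j2
    · intro j2
      by_cases h : j2 = j
      · subst h
        simp only [Pi.zero_apply, add_zero, Pi.single_eq_same]
        rw [mul_add]
        exact ⟨by linarith, by linarith⟩
      · simp only [Pi.zero_apply, add_zero, Pi.single_eq_of_ne h]
        exact hp4 j2
    · intro j2
      by_cases h : j2 = j
      · subst h
        simp only [Pi.zero_apply, sub_zero, Pi.single_eq_same]
        rw [mul_sub]
        exact ⟨by linarith, by linarith⟩
      · simp only [Pi.zero_apply, sub_zero, Pi.single_eq_of_ne h]
        exact hp4 j2
    · intro j' hk
      have hj' : j' ≠ j := by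
        intro h
        have h1 := (hkne j' hk).1
        rw [h] at h1
        linarith
      simp [Pi.single_eq_of_ne hj']
    · rintro ⟨h1, -⟩
      have h2 := congrFun h1 j
      rw [Pi.single_eq_same] at h2
      have : (0 : ℝ) = (0 : Fin n → ℝ) j := rfl
      rw [← this] at h2
      linarith
  -- Step 2: no other fractional coordinate
  have hpair : ∀ j1 j2 : Fin n, j1 ≠ j2 → 0 < p.1 j1 → p.1 j1 < 1 → 0 < p.1 j2 →
      p.1 j2 < 1 → False := by
    intro j1 j2 hne h10 h11 h20 h21
    have ht1 := htight j1 h10 h11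
    have ht2 := htight j2 h20 h21
    obtain ⟨σ1, hσ1, hf1⟩ : ∃ σ1 : ℝ, (σ1 = 1 ∨ σ1 = -1) ∧ p.2 j1.succ = σ1 * (fbar * p.1 j1) := by
      rcases ht1 with h | h
      · exact ⟨-1, Or.inr rfl, by linarith⟩
      · exact ⟨1, Or.inl rfl, by linarith⟩
    obtain ⟨σ2, hσ2, hf2⟩ : ∃ σ2 : ℝ, (σ2 = 1 ∨ σ2 = -1) ∧ p.2 j2.succ = σ2 * (fbar * p.1 j2) := by
      rcases ht2 with h | h
      · exact ⟨-1, Or.inr rfl, by linarith⟩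
      · exact ⟨1, Or.inl rfl, by linarith⟩
    have hss : j1.succ ≠ j2.succ := fun h => hne (Fin.succ_injective _ h)
    set ε := min (min (p.1 j1) (1 - p.1 j1)) (min (p.1 j2) (1 - p.1 j2)) with hεdef
    have hε : 0 < ε := lt_min (lt_min h10 (by linarith)) (lt_min h20 (by linarith))
    have hεa : ε ≤ p.1 j1 := le_trans (min_le_left _ _) (min_le_left _ _)
    have hεb : ε ≤ 1 - p.1 j1 := le_trans (min_le_left _ _) (min_le_right _ _)
    have hεc : ε ≤ p.1 j2 := le_trans (min_le_right _ _) (min_le_left _ _)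
    have hεd : ε ≤ 1 - p.1 j2 := le_trans (min_le_right _ _) (min_le_right _ _)
    have hfε : 0 ≤ fbar * ε := mul_nonneg hfbar.le hε.le
    set wx : Fin n → ℝ := Pi.single j1 ε + Pi.single j2 (-(σ1 * σ2) * ε) with hwxdef
    set wf : Fin (n + 1) → ℝ :=
      Pi.single j1.succ (σ1 * (fbar * ε)) + Pi.single j2.succ (-(σ1 * (fbar * ε))) with hwfdef
    have hwx1 : wx j1 = ε := by
      rw [hwxdef, Pi.add_apply, Pi.single_eq_same, Pi.single_eq_of_ne hne, add_zero]
    have hwx2 : wx j2 = -(σ1 * σ2) * ε := by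
      rw [hwxdef, Pi.add_apply, Pi.single_eq_same, Pi.single_eq_of_ne (Ne.symm hne), zero_add]
    have hwx0 : ∀ j, j ≠ j1 → j ≠ j2 → wx j = 0 := by
      intro j h1 h2
      rw [hwxdef, Pi.add_apply, Pi.single_eq_of_ne h1, Pi.single_eq_of_ne h2, add_zero]
    have hwf1 : wf j1.succ = σ1 * (fbar * ε) := by
      rw [hwfdef, Pi.add_apply, Pi.single_eq_same, Pi.single_eq_of_ne hss, add_zero]
    have hwf2 : wf j2.succ = -(σ1 * (fbar * ε)) := by
      rw [hwfdef, Pi.add_apply, Pi.single_eq_same, Pi.single_eq_of_ne hss.symm, zero_add]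
    have hwf0 : ∀ i, i ≠ j1.succ → i ≠ j2.succ → wf i = 0 := by
      intro i h1 h2
      rw [hwfdef, Pi.add_apply, Pi.single_eq_of_ne h1, Pi.single_eq_of_ne h2, add_zero]
    have hk1 : k ≠ j1.succ := by
      rintro rfl
      rcases hkne _ rfl with ⟨hh, -⟩
      linarith
    have hk2 : k ≠ j2.succ := by
      rintro rfl
      rcases hkne _ rfl with ⟨hh, -⟩
      linarith
    have hwfk : wf k = 0 := hwf0 k hk1 hk2
    refine hperturb wx wf ?_ ?_ ?_ ?_ ?_ ?_ ?_ ?_ ?_ ?_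
    · intro j
      by_cases h1 : j = j1
      · subst h1
        rw [hwx1]
        exact ⟨by linarith, by linarith⟩
      · by_cases h2 : j = j2
        · subst h2
          rw [hwx2]
          rcases hσ1 with rfl | rfl <;> rcases hσ2 with rfl | rfl <;> constructor <;> nlinarith
        · rw [hwx0 j h1 h2, add_zero]
          exact hp1 j
    · intro j
      by_cases h1 : j = j1
      · subst h1
        rw [hwx1]
        exact ⟨by linarith, by linarith⟩
      · by_cases h2 : j = j2
        · subst h2
          rw [hwx2]
          rcases hσ1 with rfl | rfl <;> rcases hσ2 with rfl | rfl <;> constructor <;> nlinarith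
        · rw [hwx0 j h1 h2, sub_zero]
          exact hp1 j
    · rw [hwfdef]
      simp [Finset.sum_add_distrib, Finset.sum_pi_single']
    · exact hwf0 0 (Ne.symm (Fin.succ_ne_zero _)) (Ne.symm (Fin.succ_ne_zero _))
    · intro j
      by_cases h1 : j = j1
      · subst h1
        rw [hwf1, hwx1, hf1]
        rcases hσ1 with rfl | rfl <;> constructor <;> nlinarith
      · by_cases h2 : j = j2
        · subst h2
          rw [hwf2, hwx2, hf2]
          rcases hσ1 with rfl | rfl <;> rcases hσ2 with rfl | rfl <;> constructor <;> nlinarith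
        · rw [hwf0 j.succ (fun h => h1 (Fin.succ_injective _ h))
            (fun h => h2 (Fin.succ_injective _ h)), hwx0 j h1 h2, add_zero, add_zero]
          exact hp4 j
    · intro j
      by_cases h1 : j = j1
      · subst h1
        rw [hwf1, hwx1, hf1]
        rcases hσ1 with rfl | rfl <;> constructor <;> nlinarith
      · by_cases h2 : j = j2
        · subst h2
          rw [hwf2, hwx2, hf2]
          rcases hσ1 with rfl | rfl <;> rcases hσ2 with rfl | rfl <;> constructor <;> nlinarith
        · rw [hwf0 j.succ (fun h => h1 (Fin.succ_injective _ h))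
            (fun h => h2 (Fin.succ_injective _ h)), hwx0 j h1 h2, sub_zero, sub_zero]
          exact hp4 j
    · rw [hwfk, add_zero]
      exact hp5
    · rw [hwfk, sub_zero]
      exact hp5
    · intro j' hk
      have h1 : j' ≠ j1 := by
        intro h
        have := (hkne j' hk).1
        rw [h] at this
        linarith
      have h2 : j' ≠ j2 := by
        intro h
        have := (hkne j' hk).1
        rw [h] at this
        linarith
      exact hwx0 j' h1 h2
    · rintro ⟨h1, -⟩
      have h2 := congrFun h1 j1
      rw [hwx1] at h2
      have h3 : (0 : Fin n → ℝ) j1 = 0 := rfl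
      rw [h3] at h2
      linarith
  have hint2 : ∀ j : Fin n, j ≠ js → p.1 j = 0 ∨ p.1 j = 1 := by
    intro j hj
    by_contra hc
    push_neg at hc
    exact hpair j js hj (lt_of_le_of_ne (hp1 j).1 (Ne.symm hc.1))
      (lt_of_le_of_ne (hp1 j).2 hc.2) hfrac.1 hfrac.2
  have hksjs : js.succ ≠ k := by
    intro h
    rcases hkne js h.symm with ⟨-, h2⟩
    exact h2 rfl
  -- Step 3 tool: partner perturbation with js
  have hpartner : ∀ j0 : Fin n, j0 ≠ js → ∀ δ : ℝ, 0 < δ →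
      -(fbar * p.1 j0) ≤ p.2 j0.succ - δ → p.2 j0.succ + δ ≤ fbar * p.1 j0 →
      (j0.succ = k → p.2 k - δ ∈ convexHull ℝ (Vset fbar d k) ∧
        p.2 k + δ ∈ convexHull ℝ (Vset fbar d k)) → False := by
    intro j0 hj0s δ hδ hbl hbu hkc
    obtain ⟨σ, hσ, hfs⟩ : ∃ σ : ℝ, (σ = 1 ∨ σ = -1) ∧ p.2 js.succ = σ * (fbar * p.1 js) := by
      rcases htight js hfrac.1 hfrac.2 with h | h
      · exact ⟨-1, Or.inr rfl, by linarith⟩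
      · exact ⟨1, Or.inl rfl, by linarith⟩
    have hss : js.succ ≠ j0.succ := fun h => hj0s (Fin.succ_injective _ h).symm
    set s := min (min (p.1 js) (1 - p.1 js)) (δ / fbar) with hsdef
    have hs : 0 < s := lt_min (lt_min hfrac.1 (by linarith [hfrac.2])) (div_pos hδ hfbar)
    have hsa : s ≤ p.1 js := le_trans (min_le_left _ _) (min_le_left _ _)
    have hsb : s ≤ 1 - p.1 js := le_trans (min_le_left _ _) (min_le_right _ _)
    have hsc : fbar * s ≤ δ := by
      have h1 : s ≤ δ / fbar := min_le_right _ _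
      rw [le_div_iff₀ hfbar] at h1
      linarith
    have hfs0 : 0 ≤ fbar * s := mul_nonneg hfbar.le hs.le
    set wx : Fin n → ℝ := Pi.single js s with hwxdef
    set wf : Fin (n + 1) → ℝ :=
      Pi.single js.succ (σ * (fbar * s)) + Pi.single j0.succ (-(σ * (fbar * s))) with hwfdef
    have hwx1 : wx js = s := by rw [hwxdef, Pi.single_eq_same]
    have hwx0 : ∀ j, j ≠ js → wx j = 0 := by
      intro j h1
      rw [hwxdef, Pi.single_eq_of_ne h1]
    have hwf1 : wf js.succ = σ * (fbar * s) := by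
      rw [hwfdef, Pi.add_apply, Pi.single_eq_same, Pi.single_eq_of_ne hss, add_zero]
    have hwf2 : wf j0.succ = -(σ * (fbar * s)) := by
      rw [hwfdef, Pi.add_apply, Pi.single_eq_same, Pi.single_eq_of_ne hss.symm, zero_add]
    have hwf0 : ∀ i, i ≠ js.succ → i ≠ j0.succ → wf i = 0 := by
      intro i h1 h2
      rw [hwfdef, Pi.add_apply, Pi.single_eq_of_ne h1, Pi.single_eq_of_ne h2, add_zero]
    refine hperturb wx wf ?_ ?_ ?_ ?_ ?_ ?_ ?_ ?_ ?_ ?_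
    · intro j
      by_cases h1 : j = js
      · subst h1
        rw [hwx1]
        exact ⟨by linarith, by linarith⟩
      · rw [hwx0 j h1, add_zero]
        exact hp1 j
    · intro j
      by_cases h1 : j = js
      · subst h1
        rw [hwx1]
        exact ⟨by linarith, by linarith⟩
      · rw [hwx0 j h1, sub_zero]
        exact hp1 j
    · rw [hwfdef]
      simp [Finset.sum_add_distrib, Finset.sum_pi_single']
    · exact hwf0 0 (Ne.symm (Fin.succ_ne_zero _)) (Ne.symm (Fin.succ_ne_zero _))
    · intro j
      by_cases h1 : j = js
      · subst h1
        rw [hwf1, hwx1, hfs]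
        rcases hσ with rfl | rfl <;> constructor <;> nlinarith
      · by_cases h2 : j = j0
        · subst h2
          rw [hwf2, hwx0 j hj0s, add_zero]
          rcases hσ with rfl | rfl <;> constructor <;> nlinarith
        · rw [hwf0 j.succ (fun h => h1 (Fin.succ_injective _ h))
            (fun h => h2 (Fin.succ_injective _ h)), hwx0 j h1, add_zero, add_zero]
          exact hp4 j
    · intro j
      by_cases h1 : j = js
      · subst h1
        rw [hwf1, hwx1, hfs]
        rcases hσ with rfl | rfl <;> constructor <;> nlinarith
      · by_cases h2 : j = j0
        · subst h2
          rw [hwf2, hwx0 j hj0s, sub_zero]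
          rcases hσ with rfl | rfl <;> constructor <;> nlinarith
        · rw [hwf0 j.succ (fun h => h1 (Fin.succ_injective _ h))
            (fun h => h2 (Fin.succ_injective _ h)), hwx0 j h1, sub_zero, sub_zero]
          exact hp4 j
    · by_cases h2 : j0.succ = k
      · obtain ⟨hm, hpm⟩ := hkc h2
        rw [show wf k = -(σ * (fbar * s)) from h2 ▸ hwf2]
        have hseg : Set.Icc (p.2 k - δ) (p.2 k + δ) ⊆
            convexHull ℝ (Vset fbar d k) := by
          rw [← segment_eq_Icc (by linarith : p.2 k - δ ≤ p.2 k + δ)]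
          exact (convex_convexHull ℝ _).segment_subset hm hpm
        refine hseg ⟨?_, ?_⟩ <;> rcases hσ with rfl | rfl <;> nlinarith
      · rw [hwf0 k hksjs.symm (fun h => h2 h.symm), add_zero]
        exact hp5
    · by_cases h2 : j0.succ = k
      · obtain ⟨hm, hpm⟩ := hkc h2
        rw [show wf k = -(σ * (fbar * s)) from h2 ▸ hwf2]
        have hseg : Set.Icc (p.2 k - δ) (p.2 k + δ) ⊆
            convexHull ℝ (Vset fbar d k) := by
          rw [← segment_eq_Icc (by linarith : p.2 k - δ ≤ p.2 k + δ)]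
          exact (convex_convexHull ℝ _).segment_subset hm hpm
        refine hseg ⟨?_, ?_⟩ <;> rcases hσ with rfl | rfl <;> nlinarith
      · rw [hwf0 k hksjs.symm (fun h => h2 h.symm), sub_zero]
        exact hp5
    · intro j' hk
      exact hwx0 j' (hkne j' hk).2
    · rintro ⟨h1, -⟩
      have h2 := congrFun h1 js
      rw [hwx1] at h2
      have h3 : (0 : Fin n → ℝ) js = 0 := rfl
      rw [h3] at h2
      linarith
  -- Step 3: other f coordinates are at endpoints
  have hend : ∀ j : Fin n, j ≠ js → j.succ ≠ k →
      p.2 j.succ = -(fbar * p.1 j) ∨ p.2 j.succ = fbar * p.1 j := by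
    intro j hj hjk
    by_contra hc
    push_neg at hc
    have hl : -(fbar * p.1 j) < p.2 j.succ := lt_of_le_of_ne (hp4 j).1 (Ne.symm hc.1)
    have hu : p.2 j.succ < fbar * p.1 j := lt_of_le_of_ne (hp4 j).2 hc.2
    refine hpartner j hj (min (p.2 j.succ + fbar * p.1 j) (fbar * p.1 j - p.2 j.succ))
      (lt_min (by linarith) (by linarith)) ?_ ?_ (fun h => absurd h hjk)
    · have := min_le_left (p.2 j.succ + fbar * p.1 j) (fbar * p.1 j - p.2 j.succ)
      linarith
    · have := min_le_right (p.2 j.succ + fbar * p.1 j) (fbar * p.1 j - p.2 j.succ)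
      linarith
  -- Step 4: p.2 k ∈ Vset
  have hfk : p.2 k ∈ Vset fbar d k := by
    have hVfin := Vset_finite (n := n) fbar d k
    have hVne : (Vset fbar d k).Nonempty := by
      by_contra h
      rw [Set.not_nonempty_iff_eq_empty] at h
      rw [h, convexHull_empty] at hp5
      exact hp5
    have hconv := convexHull_finite_eq_Icc hVfin hVne
    have hVsub : ∀ v ∈ Vset fbar d k,
        v ∈ Set.Icc (Fin.cases (motive := fun _ => ℝ) 0 (fun _ => -fbar) k)
          (Fin.cases (motive := fun _ => ℝ) 0 (fun _ => fbar) k) := fun v hv => hv.2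
    rcases Fin.eq_zero_or_eq_succ k with rfl | ⟨j', hk⟩
    · obtain ⟨v, hv⟩ := hVne
      have hv' := hVsub v hv
      simp only [Fin.cases_zero] at hv'
      have hv0 : v = 0 := le_antisymm hv'.2 hv'.1
      rw [hp3, ← hv0]
      exact hv
    · have haV : sInf (Vset fbar d k) ∈ Vset fbar d k := hVne.csInf_mem hVfin
      have hbV : sSup (Vset fbar d k) ∈ Vset fbar d k := hVne.csSup_mem hVfin
      have hpk : p.2 k ∈ Set.Icc (sInf (Vset fbar d k)) (sSup (Vset fbar d k)) := by
        rw [← hconv]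
        exact hp5
      by_cases hab : p.2 k = sInf (Vset fbar d k) ∨ p.2 k = sSup (Vset fbar d k)
      · rcases hab with h | h <;> rw [h]
        · exact haV
        · exact hbV
      · push_neg at hab
        have ha : sInf (Vset fbar d k) < p.2 k := lt_of_le_of_ne hpk.1 (Ne.symm hab.1)
        have hb : p.2 k < sSup (Vset fbar d k) := lt_of_le_of_ne hpk.2 hab.2
        have haI := hVsub _ haV
        rw [hk] at haI
        simp only [Fin.cases_succ] at haI
        rw [← hk] at haI
        set δ := min (p.2 k - sInf (Vset fbar d k)) (sSup (Vset fbar d k) - p.2 k) with hδdef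
        have hδ : 0 < δ := lt_min (by linarith) (by linarith)
        have hδa : δ ≤ p.2 k - sInf (Vset fbar d k) := min_le_left _ _
        have hδb : δ ≤ sSup (Vset fbar d k) - p.2 k := min_le_right _ _
        have hx1 : p.1 j' = 1 := (hkne j' hk).1
        exfalso
        refine hpartner j' (hkne j' hk).2 δ hδ ?_ ?_ (fun _ => ⟨?_, ?_⟩)
        · rw [← hk, hx1, mul_one]
          linarith [haI.1]
        · rw [← hk, hx1, mul_one]
          have hbI := hVsub _ hbV
          rw [hk] at hbI
          simp only [Fin.cases_succ] at hbI
          rw [← hk] at hbI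
          linarith [hbI.2]
        · rw [hconv]
          exact ⟨by linarith, by linarith⟩
        · rw [hconv]
          exact ⟨by linarith, by linarith⟩
  -- Step 5: arithmetic contradiction
  obtain ⟨⟨g, hg, hgs⟩, -⟩ := hfk
  have hEz : ∀ i : Fin (n + 1), i ≠ k → ∃ z : ℤ, g i = fbar * z := by
    intro i hik
    have hgi := hg i hik
    rcases Fin.eq_zero_or_eq_succ i with rfl | ⟨j, rfl⟩
    · simp only [Eset, Fin.cases_zero, Set.mem_singleton_iff] at hgi
      exact ⟨0, by rw [hgi]; simp⟩
    · simp only [Eset, Fin.cases_succ, Set.mem_insert_iff, Set.mem_singleton_iff] at hgi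
      rcases hgi with h | h | h
      · exact ⟨-1, by rw [h]; push_cast; ring⟩
      · exact ⟨0, by rw [h]; simp⟩
      · exact ⟨1, by rw [h]; simp⟩
  have hPz : ∀ i ∈ (Finset.univ.erase k).erase js.succ, ∃ z : ℤ, g i - p.2 i = fbar * z := by
    intro i hi
    have his : i ≠ js.succ := (Finset.mem_erase.mp hi).1
    have hik : i ≠ k := (Finset.mem_erase.mp (Finset.mem_of_mem_erase hi)).1
    obtain ⟨z1, hz1⟩ := hEz i hik
    rcases Fin.eq_zero_or_eq_succ i with rfl | ⟨j, rfl⟩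
    · exact ⟨z1, by rw [hp3, sub_zero]; exact hz1⟩
    · have hj : j ≠ js := fun h => his (by rw [h])
      obtain ⟨z2, hz2⟩ : ∃ z2 : ℤ, p.2 j.succ = fbar * z2 := by
        rcases hend j hj hik with h | h <;> rcases hint2 j hj with h0 | h0
        · exact ⟨0, by rw [h, h0]; simp⟩
        · exact ⟨-1, by rw [h, h0]; push_cast; ring⟩
        · exact ⟨0, by rw [h, h0]; simp⟩
        · exact ⟨1, by rw [h, h0]; simp⟩
      exact ⟨z1 - z2, by rw [hz1, hz2]; push_cast; ring⟩
  have hsumZ : ∀ t : Finset (Fin (n + 1)), t ⊆ (Finset.univ.erase k).erase js.succ →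
      ∃ z : ℤ, ∑ i ∈ t, (g i - p.2 i) = fbar * z := by
    intro t ht
    induction t using Finset.induction with
    | empty => exact ⟨0, by simp⟩
    | @insert a t ha ih =>
      obtain ⟨z, hz⟩ := ih (fun i hi => ht (Finset.mem_insert_of_mem hi))
      obtain ⟨z', hz'⟩ := hPz a (ht (Finset.mem_insert_self a t))
      refine ⟨z' + z, ?_⟩
      rw [Finset.sum_insert ha, hz, hz']
      push_cast
      ring
  obtain ⟨Z, hZsum⟩ := hsumZ _ (subset_refl _)
  have h1 : ∑ i ∈ Finset.univ.erase k, p.2 i = d - p.2 k := by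
    have h := Finset.sum_erase_add Finset.univ p.2 (Finset.mem_univ k)
    rw [hp2] at h
    linarith
  have h2 : ∑ i ∈ Finset.univ.erase k, g i = d - p.2 k := by linarith [hgs]
  have h3 : ∑ i ∈ Finset.univ.erase k, (g i - p.2 i) = 0 := by
    rw [Finset.sum_sub_distrib, h1, h2, sub_self]
  have h4 : (g js.succ - p.2 js.succ) + ∑ i ∈ (Finset.univ.erase k).erase js.succ,
      (g i - p.2 i) = ∑ i ∈ Finset.univ.erase k, (g i - p.2 i) :=
    Finset.add_sum_erase _ (fun i => g i - p.2 i) (Finset.mem_erase.mpr ⟨hksjs, Finset.mem_univ _⟩)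
  obtain ⟨z0, hz0⟩ := hEz js.succ hksjs
  have h5 : p.2 js.succ = fbar * ((z0 + Z : ℤ) : ℝ) := by
    push_cast
    rw [hZsum] at h4
    rw [h3] at h4
    nlinarith [h4, hz0]
  have hfin : ∀ c : ℤ, p.1 js = (c : ℝ) → False := by
    intro c hc
    have hc0 : (0 : ℝ) < (c : ℝ) := by rw [← hc]; exact hfrac.1
    have hc1 : (c : ℝ) < 1 := by rw [← hc]; exact hfrac.2
    have hi0 : 0 < c := by exact_mod_cast hc0
    have hi1 : c < 1 := by exact_mod_cast hc1
    omega
  rcases htight js hfrac.1 hfrac.2 with hs | hs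
  · refine hfin (-(z0 + Z)) ?_
    have : fbar * p.1 js = fbar * ((-(z0 + Z) : ℤ) : ℝ) := by
      push_cast
      push_cast at h5
      linarith [hs, h5]
    exact mul_left_cancel₀ hfbar.ne' this
  · refine hfin (z0 + Z) ?_
    have : fbar * p.1 js = fbar * ((z0 + Z : ℤ) : ℝ) := by
      push_cast
      push_cast at h5
      linarith [hs, h5]
    exact mul_left_cancel₀ hfbar.ne' this


lemma Aset_subset_O (fbar d : ℝ) :
    Aset n fbar d ⊆ ⋃ k, Okset n fbar d k := by
  rintro p ⟨⟨hx, hsum, h0, hb⟩, k, hE, hV, hXe⟩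
  refine Set.mem_iUnion.mpr ⟨k, ?_⟩
  exact ⟨fun j => by rcases hx j with h | h <;> rw [h] <;> norm_num, hsum, h0, hb,
    subset_convexHull ℝ _ hV, hXe⟩

lemma Sset_subset_hullA {fbar : ℝ} (d : ℝ) (hfbar : 0 < fbar) :
    Sset n fbar d ⊆ convexHull ℝ (Aset n fbar d) := by
  intro p hp
  obtain ⟨hx, hsum, h0, hb⟩ := hp
  have hpK : p ∈ Kx n fbar d p.1 := ⟨rfl, hsum, h0, hb⟩
  have hKcomp : IsCompact (Kx n fbar d p.1) :=
    isCompact_Kx d hfbar p.1 (fun j => by rcases hx j with h | h <;> rw [h] <;> norm_num)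
  have hclose := closure_convexHull_extremePoints hKcomp (convex_Kx fbar d p.1)
  have hsub : (Kx n fbar d p.1).extremePoints ℝ ⊆ Aset n fbar d :=
    extremePoints_Kx_subset_Aset hfbar p.1 hx
  have h1 : p ∈ closure (convexHull ℝ ((Kx n fbar d p.1).extremePoints ℝ)) := by
    rw [hclose]; exact hpK
  have h2 := closure_mono (convexHull_mono hsub) h1
  have h3 : IsClosed (convexHull ℝ (Aset n fbar d)) :=
    ((Aset_finite n fbar d).isCompact_convexHull ℝ).isClosed
  rwa [h3.closure_eq] at h2

lemma Okset_subset_hullA {fbar : ℝ} (d : ℝ) (hfbar : 0 < fbar) (k : Fin (n + 1)) :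
    Okset n fbar d k ⊆ convexHull ℝ (Aset n fbar d) := by
  intro p hp
  have hcomp := isCompact_Okset d hfbar k (n := n)
  have hclose := closure_convexHull_extremePoints hcomp (convex_Okset fbar d k)
  have hsub : (Okset n fbar d k).extremePoints ℝ ⊆ convexHull ℝ (Aset n fbar d) :=
    fun q hq => Sset_subset_hullA d hfbar (extremePoints_Okset_subset_Sset hfbar k hq)
  have h1 : p ∈ closure (convexHull ℝ ((Okset n fbar d k).extremePoints ℝ)) := by
    rw [hclose]; exact hp
  have h2 := closure_mono (convexHull_min hsub (convex_convexHull ℝ _)) h1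
  have h3 : IsClosed (convexHull ℝ (Aset n fbar d)) :=
    ((Aset_finite n fbar d).isCompact_convexHull ℝ).isClosed
  rwa [h3.closure_eq] at h2

end ConvOS7

open ConvOS7

/-- in the special case `f̲₀ = f̄₀ = 0`, common capacity `f̄ > 0`
and `0 ≤ d < f̄`, the outer approximation is exact: `conv(O) = conv(S)`. -/
theorem convO_eq_convS (n : ℕ) (hn : 1 ≤ n)
    (fbar d : ℝ) (hfbar : 0 < fbar) (hd0 : 0 ≤ d) (hd : d < fbar)
    -- bounds: `f̲₀ = f̄₀ = 0`, `f̲ⱼ = -f̄`, `f̄ⱼ = f̄` for `j ∈ [1:n]`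
    (flo fup : Fin (n + 1) → ℝ)
    (hflo : flo = Fin.cases (motive := fun _ => ℝ) 0 (fun _ => -fbar))
    (hfup : fup = Fin.cases (motive := fun _ => ℝ) 0 (fun _ => fbar))
    (S : Set ((Fin n → ℝ) × (Fin (n + 1) → ℝ)))
    (hS : S = {p | (∀ j, p.1 j = 0 ∨ p.1 j = 1) ∧
      (∑ j, p.2 j) = d ∧ flo 0 ≤ p.2 0 ∧ p.2 0 ≤ fup 0 ∧
      ∀ j : Fin n, -(fup j.succ * p.1 j) ≤ p.2 j.succ ∧ p.2 j.succ ≤ fup j.succ * p.1 j})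
    (xe : (Fin n → ℝ) → Fin (n + 1) → ℝ)
    (hxe : ∀ x, xe x = Fin.cases (motive := fun _ => ℝ) 1 x)
    (E : Fin (n + 1) → Set ℝ)
    (hE : E = Fin.cases (motive := fun _ => Set ℝ) {0}
      (fun _ => {-fbar, 0, fbar}))
    (V : Fin (n + 1) → Set ℝ)
    (hV : ∀ k, V k = {v | (∃ g : Fin (n + 1) → ℝ, (∀ j, j ≠ k → g j ∈ E j) ∧
        v = d - ∑ j ∈ Finset.univ.erase k, g j)} ∩ Set.Icc (flo k) (fup k))
    (O : Set ((Fin n → ℝ) × (Fin (n + 1) → ℝ)))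
    (hO : O = ⋃ k : Fin (n + 1), {p | (∀ j, 0 ≤ p.1 j ∧ p.1 j ≤ 1) ∧
      (∑ j, p.2 j) = d ∧
      (∀ i : Fin (n + 1), flo i * xe p.1 i ≤ p.2 i ∧ p.2 i ≤ fup i * xe p.1 i) ∧
      p.2 k ∈ convexHull ℝ (V k) ∧ xe p.1 k = 1}) :
    convexHull ℝ O = convexHull ℝ S := by
  subst hflo hfup hS hE hO
  have hVeq : ∀ k, V k = Vset fbar d k := fun k => by rw [hV k]; rfl
  have hSeq : {p : (Fin n → ℝ) × (Fin (n + 1) → ℝ) | (∀ j, p.1 j = 0 ∨ p.1 j = 1) ∧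
      (∑ j, p.2 j) = d ∧
      Fin.cases (motive := fun _ => ℝ) 0 (fun _ => -fbar) (0 : Fin (n + 1)) ≤ p.2 0 ∧
      p.2 0 ≤ Fin.cases (motive := fun _ => ℝ) 0 (fun _ => fbar) (0 : Fin (n + 1)) ∧
      ∀ j : Fin n, -(Fin.cases (motive := fun _ => ℝ) 0 (fun _ => fbar) j.succ * p.1 j) ≤
        p.2 j.succ ∧ p.2 j.succ ≤
          Fin.cases (motive := fun _ => ℝ) 0 (fun _ => fbar) j.succ * p.1 j}
      = Sset n fbar d := by
    ext p
    simp only [Set.mem_setOf_eq, Fin.cases_zero, Fin.cases_succ, Sset]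
    constructor
    · rintro ⟨h1, h2, h3, h4, h5⟩
      exact ⟨h1, h2, le_antisymm h4 h3, h5⟩
    · rintro ⟨h1, h2, h3, h4⟩
      exact ⟨h1, h2, by rw [h3], by rw [h3], h4⟩
  rw [hSeq]
  have hOeq : (⋃ k : Fin (n + 1), {p : (Fin n → ℝ) × (Fin (n + 1) → ℝ) |
      (∀ j, 0 ≤ p.1 j ∧ p.1 j ≤ 1) ∧ (∑ j, p.2 j) = d ∧
      (∀ i : Fin (n + 1),
        Fin.cases (motive := fun _ => ℝ) 0 (fun _ => -fbar) i * xe p.1 i ≤ p.2 i ∧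
        p.2 i ≤ Fin.cases (motive := fun _ => ℝ) 0 (fun _ => fbar) i * xe p.1 i) ∧
      p.2 k ∈ convexHull ℝ (V k) ∧ xe p.1 k = 1})
      = ⋃ k, Okset n fbar d k := by
    ext p
    simp only [Set.mem_iUnion, Set.mem_setOf_eq]
    constructor
    · rintro ⟨k, h1, h2, h3, h4, h5⟩
      refine ⟨k, h1, h2, ?_, ?_, ?_, ?_⟩
      · have h30 := h3 0
        rw [hxe p.1] at h30
        simp only [Fin.cases_zero, zero_mul] at h30
        exact le_antisymm h30.2 h30.1
      · intro j
        have h3j := h3 j.succ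
        rw [hxe p.1] at h3j
        simp only [Fin.cases_succ] at h3j
        exact ⟨by linarith [h3j.1], h3j.2⟩
      · rw [← hVeq k]
        exact h4
      · have h5' := h5
        rw [hxe p.1] at h5'
        exact h5'
    · rintro ⟨k, h1, h2, h3, h4, h5, h6⟩
      refine ⟨k, h1, h2, ?_, ?_, ?_⟩
      · intro i
        rw [hxe p.1]
        rcases Fin.eq_zero_or_eq_succ i with rfl | ⟨j, rfl⟩
        · simp only [Fin.cases_zero, zero_mul, h3]
          exact ⟨le_refl _, le_refl _⟩
        · simp only [Fin.cases_succ]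
          exact ⟨by linarith [(h4 j).1], (h4 j).2⟩
      · rw [hVeq k]
        exact h5
      · rw [hxe p.1]
        exact h6
  rw [hOeq]
  apply Set.Subset.antisymm
  · refine convexHull_min (fun p hp => ?_) (convex_convexHull ℝ _)
    obtain ⟨k, hpk⟩ := Set.mem_iUnion.mp hp
    exact convexHull_mono (Aset_subset_Sset n fbar d) (Okset_subset_hullA d hfbar k hpk)
  · refine convexHull_min (fun p hp => ?_) (convex_convexHull ℝ _)
    exact convexHull_mono (Aset_subset_O fbar d) (Sset_subset_hullA d hfbar hp)
end

section
/- Assume f̲_0 = f̄_0 = 0, f̄_j = f̄ for all j ∈ {1,…,n} for a common f̄ > 0, and 0 ≤ d < f̄. Then for every partition (J1, J2, J3) of {1,…,n} (pairwise disjoint sets with union {1,…,n}) and every (x,f) ∈ S, the inequality ∑_{j∈J1} (f̄ − d)(f̄ x_j + f_j) + ∑_{j∈J2} (f̄ − d)·d·x_j + ∑_{j∈J3} d(f̄ x_j − f_j) ≥ (f̄ − d)·d holds; consequently these inequalities are valid for conv(S). -/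
/-!
If `x j = 1` for some `j ∈ J2`, every summand is nonnegative and the `J2`-sum alone reaches
`(fbar - d) * d`. Otherwise `x` and `f` vanish on `J2`, so the flow `d` splits as `s1 + s3`
over `J1` and `J3`. With `k1`, `k3` the numbers of ones of `x` on `J1`, `J3`, the slack is
`fbar * ((fbar - d) * k1 + s1 + d * k3 - d)`, and integrality of `k1`, `k3` makes the bracket
nonnegative: use `s1 ≥ d - fbar * k3` if `k3 ≤ k1`, and `s1 ≥ -fbar * k1` if `k3 ≥ k1 + 1`.
The left-hand side is linear, so the inequality passes to the convex hull.
-/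

open Finset

section PartitionInequality

variable {ι : Type*} {F d : ℝ} {J1 J2 J3 : Finset ι} {x g : ι → ℝ}

/-- `g j` plays the role of `f (j + 1)`: in `S` the flow is indexed from `0`, with `f 0 = 0`. -/
def partitionForm (F d : ℝ) (J1 J2 J3 : Finset ι) (x g : ι → ℝ) : ℝ :=
  (∑ j ∈ J1, (F - d) * (F * x j + g j)) +
  (∑ j ∈ J2, (F - d) * d * x j) +
  (∑ j ∈ J3, d * (F * x j - g j))

lemma exists_sum_eq_natCast_of_binary (s : Finset ι) (hx : ∀ j, x j = 0 ∨ x j = 1) :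
    ∃ k : ℕ, ∑ j ∈ s, x j = k :=
  Finset.sum_induction x (fun r => ∃ k : ℕ, r = k)
    (fun _ _ ⟨a, ha⟩ ⟨b, hb⟩ => ⟨a + b, by rw [ha, hb, Nat.cast_add]⟩) ⟨0, Nat.cast_zero.symm⟩
    (fun j _ => (hx j).elim (fun h => ⟨0, by simp [h]⟩) (fun h => ⟨1, by simp [h]⟩))

lemma partition_bound_of_aggregate {k1 k3 : ℕ} {s1 s3 : ℝ} (hd0 : 0 ≤ d) (hdF : d ≤ F)
    (hs1 : -(F * k1) ≤ s1) (hs3 : s3 ≤ F * k3) (hs : s1 + s3 = d) :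
    (F - d) * d ≤ (F - d) * (F * k1 + s1) + d * (F * k3 - s3) := by
  obtain rfl : s3 = d - s1 := by linarith
  have hslack : d ≤ (F - d) * k1 + s1 + d * k3 := by
    rcases le_or_gt k3 k1 with h | h
    · have hk : (k3 : ℝ) ≤ k1 := by exact_mod_cast h
      nlinarith [mul_nonneg (sub_nonneg.2 hdF) (sub_nonneg.2 hk)]
    · have hk : (k1 : ℝ) + 1 ≤ k3 := by exact_mod_cast h
      nlinarith [mul_le_mul_of_nonneg_left hk hd0]
  nlinarith [mul_nonneg (hd0.trans hdF) (sub_nonneg.2 hslack)]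

variable (hd0 : 0 ≤ d) (hdF : d ≤ F) (hx : ∀ j, x j = 0 ∨ x j = 1)
  (hg : ∀ j, -(F * x j) ≤ g j ∧ g j ≤ F * x j)
include hd0 hdF hx hg

lemma le_partitionForm_of_mem_of_eq_one {j₀ : ι} (hj₀ : j₀ ∈ J2) (hxj₀ : x j₀ = 1) :
    (F - d) * d ≤ partitionForm F d J1 J2 J3 x g := by
  have hFd : 0 ≤ F - d := sub_nonneg.2 hdF
  have hx0 : ∀ j, 0 ≤ x j := fun j => (hx j).elim (fun h => h.ge) (fun h => h ▸ zero_le_one)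
  have h1 : 0 ≤ ∑ j ∈ J1, (F - d) * (F * x j + g j) :=
    sum_nonneg fun j _ => mul_nonneg hFd (by linarith [(hg j).1])
  have h3 : 0 ≤ ∑ j ∈ J3, d * (F * x j - g j) :=
    sum_nonneg fun j _ => mul_nonneg hd0 (by linarith [(hg j).2])
  have h2 : (F - d) * d * x j₀ ≤ ∑ j ∈ J2, (F - d) * d * x j :=
    single_le_sum (fun j _ => mul_nonneg (mul_nonneg hFd hd0) (hx0 j)) hj₀
  rw [hxj₀, mul_one] at h2
  unfold partitionForm
  linarith

lemma le_partitionForm_of_forall_eq_zero [DecidableEq ι] (h12 : Disjoint J1 J2) (h13 : Disjoint J1 J3)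
    (h23 : Disjoint J2 J3) (hsum : ∑ j ∈ J1 ∪ J2 ∪ J3, g j = d) (hJ2 : ∀ j ∈ J2, x j = 0) :
    (F - d) * d ≤ partitionForm F d J1 J2 J3 x g := by
  have hg2 : ∀ j ∈ J2, g j = 0 := fun j hj => by
    have := hg j
    rw [hJ2 j hj, mul_zero, neg_zero] at this
    exact le_antisymm this.2 this.1
  have hs : ∑ j ∈ J1, g j + ∑ j ∈ J3, g j = d := by
    rwa [sum_union (disjoint_union_left.2 ⟨h13, h23⟩), sum_union h12, sum_eq_zero hg2,
      add_zero] at hsum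
  obtain ⟨k1, hk1⟩ := exists_sum_eq_natCast_of_binary J1 hx
  obtain ⟨k3, hk3⟩ := exists_sum_eq_natCast_of_binary J3 hx
  have hs1 : -(F * k1) ≤ ∑ j ∈ J1, g j := by
    rw [← hk1, mul_sum, ← sum_neg_distrib]
    exact sum_le_sum fun j _ => (hg j).1
  have hs3 : ∑ j ∈ J3, g j ≤ F * k3 := by
    rw [← hk3, mul_sum]
    exact sum_le_sum fun j _ => (hg j).2
  have hform : partitionForm F d J1 J2 J3 x g
      = (F - d) * (F * k1 + ∑ j ∈ J1, g j) + d * (F * k3 - ∑ j ∈ J3, g j) := by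
    rw [partitionForm, sum_eq_zero (s := J2) fun j hj => by rw [hJ2 j hj, mul_zero], ← hk1, ← hk3]
    simp only [mul_sum, ← sum_add_distrib, ← sum_sub_distrib, add_zero, mul_add, mul_sub]
  rw [hform]
  exact partition_bound_of_aggregate hd0 hdF hs1 hs3 hs

lemma le_partitionForm [DecidableEq ι] (h12 : Disjoint J1 J2) (h13 : Disjoint J1 J3) (h23 : Disjoint J2 J3)
    (hsum : ∑ j ∈ J1 ∪ J2 ∪ J3, g j = d) : (F - d) * d ≤ partitionForm F d J1 J2 J3 x g := by
  by_cases h : ∃ j ∈ J2, x j = 1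
  · obtain ⟨j₀, hj₀, hxj₀⟩ := h
    exact le_partitionForm_of_mem_of_eq_one hd0 hdF hx hg hj₀ hxj₀
  · push Not at h
    exact le_partitionForm_of_forall_eq_zero hd0 hdF hx hg h12 h13 h23 hsum
      fun j hj => (hx j).resolve_right (h j hj)

end PartitionInequality

lemma isLinearMap_partitionForm {ι E : Type*} [AddCommGroup E] [Module ℝ E] (F d : ℝ)
    (J1 J2 J3 : Finset ι) {X G : E → ι → ℝ} (hX : IsLinearMap ℝ X) (hG : IsLinearMap ℝ G) :
    IsLinearMap ℝ fun q => partitionForm F d J1 J2 J3 (X q) (G q) := by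
  constructor
  · intro q r
    simp only [partitionForm, hX.map_add, hG.map_add, Pi.add_apply, mul_add, mul_sub,
      sum_add_distrib, sum_sub_distrib]
    ring
  · intro c q
    simp only [partitionForm, hX.map_smul, hG.map_smul, Pi.smul_apply, smul_eq_mul]
    rw [mul_add, mul_add, mul_sum, mul_sum, mul_sum]
    refine congrArg₂ (· + ·) (congrArg₂ (· + ·) ?_ ?_) ?_ <;>
      exact sum_congr rfl fun j _ => by ring

theorem partition_inequalities_valid_general (n : ℕ)
    (fbar d : ℝ) (hd0 : 0 ≤ d) (hd : d < fbar)
    (S : Set ((Fin n → ℝ) × (Fin (n + 1) → ℝ)))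
    (hS : S = {p | (∀ j, p.1 j = 0 ∨ p.1 j = 1) ∧
      (∑ j, p.2 j) = d ∧ p.2 0 = 0 ∧
      ∀ j : Fin n, -(fbar * p.1 j) ≤ p.2 j.succ ∧ p.2 j.succ ≤ fbar * p.1 j}) :
    ∀ J1 J2 J3 : Finset (Fin n),
      Disjoint J1 J2 → Disjoint J1 J3 → Disjoint J2 J3 →
      J1 ∪ J2 ∪ J3 = Finset.univ →
      (∀ p ∈ S,
        (∑ j ∈ J1, (fbar - d) * (fbar * p.1 j + p.2 j.succ)) +
        (∑ j ∈ J2, (fbar - d) * d * p.1 j) +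
        (∑ j ∈ J3, d * (fbar * p.1 j - p.2 j.succ)) ≥ (fbar - d) * d) ∧
      (∀ p ∈ convexHull ℝ S,
        (∑ j ∈ J1, (fbar - d) * (fbar * p.1 j + p.2 j.succ)) +
        (∑ j ∈ J2, (fbar - d) * d * p.1 j) +
        (∑ j ∈ J3, d * (fbar * p.1 j - p.2 j.succ)) ≥ (fbar - d) * d) := by
  intro J1 J2 J3 h12 h13 h23 hunion
  have hvalid : ∀ p ∈ S,
      (fbar - d) * d ≤ partitionForm fbar d J1 J2 J3 p.1 fun j => p.2 j.succ := by
    intro p hp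
    rw [hS] at hp
    obtain ⟨hx, hsum, h0, hg⟩ := hp
    refine le_partitionForm hd0 hd.le hx hg h12 h13 h23 ?_
    rw [hunion, ← hsum, Fin.sum_univ_succ, h0, zero_add]
  have hlin : IsLinearMap ℝ fun p : (Fin n → ℝ) × (Fin (n + 1) → ℝ) =>
      partitionForm fbar d J1 J2 J3 p.1 fun j => p.2 j.succ :=
    isLinearMap_partitionForm fbar d J1 J2 J3 (LinearMap.fst ℝ _ _).isLinear
      (LinearMap.funLeft ℝ ℝ Fin.succ ∘ₗ LinearMap.snd ℝ _ _).isLinear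
  exact ⟨hvalid, fun p hp => convexHull_min hvalid (convex_halfSpace_ge hlin _) hp⟩

/-- validity of the partition inequalities for `S` and hence for
`conv(S)`. -/
theorem partition_inequalities_valid (n : ℕ) (hn : 1 ≤ n)
    (fbar d : ℝ) (hfbar : 0 < fbar) (hd0 : 0 ≤ d) (hd : d < fbar)
    (S : Set ((Fin n → ℝ) × (Fin (n + 1) → ℝ)))
    (hS : S = {p | (∀ j, p.1 j = 0 ∨ p.1 j = 1) ∧
      (∑ j, p.2 j) = d ∧ p.2 0 = 0 ∧
      ∀ j : Fin n, -(fbar * p.1 j) ≤ p.2 j.succ ∧ p.2 j.succ ≤ fbar * p.1 j}) :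
    ∀ J1 J2 J3 : Finset (Fin n),
      Disjoint J1 J2 → Disjoint J1 J3 → Disjoint J2 J3 →
      J1 ∪ J2 ∪ J3 = Finset.univ →
      (∀ p ∈ S,
        (∑ j ∈ J1, (fbar - d) * (fbar * p.1 j + p.2 j.succ)) +
        (∑ j ∈ J2, (fbar - d) * d * p.1 j) +
        (∑ j ∈ J3, d * (fbar * p.1 j - p.2 j.succ)) ≥ (fbar - d) * d) ∧
      (∀ p ∈ convexHull ℝ S,
        (∑ j ∈ J1, (fbar - d) * (fbar * p.1 j + p.2 j.succ)) +
        (∑ j ∈ J2, (fbar - d) * d * p.1 j) +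
        (∑ j ∈ J3, d * (fbar * p.1 j - p.2 j.succ)) ≥ (fbar - d) * d) :=
  partition_inequalities_valid_general n fbar d hd0 hd S hS
end

section
/- Let f̄ > 0 and 0 ≤ d < f̄. Let J1' and J3' be disjoint finite index sets and let f be a real-valued assignment on J1' ∪ J3' such that ∑_{j ∈ J1' ∪ J3'} f_j = d and −f̄ ≤ f_j ≤ f̄ for all j ∈ J1' ∪ J3'. Then ∑_{j ∈ J1'} f_j ≥ d − (f̄ − d)·|J1'| − d·|J3'|. -/
/-!
The box constraints alone give two lower bounds on `∑_{J1} f`: `-f̄ |J1|` directly, and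
`d - f̄ |J3|` through `∑_{J1} f = d - ∑_{J3} f`. The claimed right-hand side never exceeds the
larger of the two: it is at most the second when `|J3| ≤ |J1|` and at most the first when
`|J3| > |J1|`, since the cardinalities are integers.
-/

open scoped BigOperators

theorem sub_mul_sub_mul_le_max {d fbar : ℝ} (hd0 : 0 ≤ d) (hd : d ≤ fbar) (n₁ n₃ : ℕ) :
    d - (fbar - d) * n₁ - d * n₃ ≤ max (d - fbar * n₃) (-fbar * n₁) := by
  rcases le_or_gt n₃ n₁ with h | h
  · have hc : (n₃ : ℝ) ≤ n₁ := by exact_mod_cast h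
    refine le_max_of_le_left ?_
    nlinarith [mul_nonneg (sub_nonneg.mpr hd) (sub_nonneg.mpr hc)]
  · have hc : (n₁ : ℝ) + 1 ≤ n₃ := by exact_mod_cast h
    refine le_max_of_le_right ?_
    nlinarith [mul_nonneg hd0 (sub_nonneg.mpr hc)]

theorem lp_lower_bound_general {ι : Type*} [DecidableEq ι]
    (fbar d : ℝ) (hd0 : 0 ≤ d) (hd : d < fbar)
    (J1 J3 : Finset ι) (hdisj : Disjoint J1 J3)
    (f : ι → ℝ)
    (hsum : (∑ j ∈ J1 ∪ J3, f j) = d)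
    (hbnd : ∀ j ∈ J1 ∪ J3, -fbar ≤ f j ∧ f j ≤ fbar) :
    (∑ j ∈ J1, f j) ≥ d - (fbar - d) * (J1.card : ℝ) - d * (J3.card : ℝ) := by
  rw [Finset.sum_union hdisj] at hsum
  have hJ1 : -fbar * J1.card ≤ ∑ j ∈ J1, f j := by
    simpa [mul_comm] using
      Finset.card_nsmul_le_sum J1 f (-fbar) fun j hj => (hbnd j (Finset.mem_union_left _ hj)).1
  have hJ3 : ∑ j ∈ J3, f j ≤ fbar * J3.card := by
    simpa [mul_comm] using
      Finset.sum_le_card_nsmul J3 f fbar fun j hj => (hbnd j (Finset.mem_union_right _ hj)).2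
  have hmax : max (d - fbar * J3.card) (-fbar * J1.card) ≤ ∑ j ∈ J1, f j :=
    max_le (by linarith) hJ1
  exact (sub_mul_sub_mul_le_max hd0 hd.le J1.card J3.card).trans hmax

/-- the key LP bound used in the validity proof of the partition
inequalities. -/
theorem lp_lower_bound {ι : Type*} [DecidableEq ι]
    (fbar d : ℝ) (hfbar : 0 < fbar) (hd0 : 0 ≤ d) (hd : d < fbar)
    (J1 J3 : Finset ι) (hdisj : Disjoint J1 J3)
    (f : ι → ℝ)
    (hsum : (∑ j ∈ J1 ∪ J3, f j) = d)
    (hbnd : ∀ j ∈ J1 ∪ J3, -fbar ≤ f j ∧ f j ≤ fbar) :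
    (∑ j ∈ J1, f j) ≥ d - (fbar - d) * (J1.card : ℝ) - d * (J3.card : ℝ) :=
  lp_lower_bound_general fbar d hd0 hd J1 J3 hdisj f hsum hbnd
end

section
/- Assume n ≥ 3, f̲_0 = f̄_0 = 0, f̄_j = 1 for all j ∈ {1,…,n}, and 0 ≤ d < 1. Then the affine span of S (equivalently, of conv(S)) in ℝ^n × ℝ^{n+1} has dimension 2n − 1. -/
open scoped BigOperators

/-!
Every point of `S` satisfies `f₀ = 0` and `∑ f = d`, so the direction of its affine span lies in
the kernel of `p ↦ (f₀, ∑ f)`, a surjection from `ℝ^(2n+1)` onto `ℝ²`; that kernel has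
dimension `2n - 1`. Conversely, for `0 ≤ d ≤ 1` and `j ≠ k` the points `(𝟙, d e_{k+1})`,
`(𝟙, e_{j+1} + (d - 1) e_{k+1})` and `(𝟙 - e_j, d e_{k+1})` lie in `S`, and their differences
`(0, e_{k+1} - e_{j+1})` and `(e_j, 0)` span the kernel.
-/

theorem vectorSpan_le_ker_of_forall_eq {k V W : Type*} [Ring k] [AddCommGroup V] [Module k V]
    [AddCommGroup W] [Module k W] (f : V →ₗ[k] W) {s : Set V} {c : W} (hs : ∀ p ∈ s, f p = c) :
    vectorSpan k s ≤ LinearMap.ker f := by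
  rw [vectorSpan_def, Submodule.span_le]
  rintro _ ⟨p, hp, q, hq, rfl⟩
  simp [hs p hp, hs q hq]

theorem Finset.sum_smul_single_sub_single {ι R : Type*} [Fintype ι] [DecidableEq ι] [Ring R]
    (g : ι → R) (hg : ∑ i, g i = 0) (c : ι) :
    ∑ i, g i • (Pi.single i 1 - Pi.single c 1 : ι → R) = g := by
  simp only [smul_sub, Finset.sum_sub_distrib, ← Finset.sum_smul, hg, zero_smul, sub_zero]
  conv_rhs => rw [← Finset.univ_sum_single g]
  simp [← Pi.single_smul']

abbrev FlowSpace (n : ℕ) := (Fin n → ℝ) × (Fin (n + 1) → ℝ)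

def flowSet (n : ℕ) (d : ℝ) : Set (FlowSpace n) :=
  {p | (∀ j, p.1 j = 0 ∨ p.1 j = 1) ∧ (∑ j, p.2 j) = d ∧ p.2 0 = 0 ∧
    ∀ j : Fin n, -(p.1 j) ≤ p.2 j.succ ∧ p.2 j.succ ≤ p.1 j}

def flowConstraints (n : ℕ) : FlowSpace n →ₗ[ℝ] ℝ × ℝ where
  toFun p := (p.2 0, ∑ j, p.2 j)
  map_add' p q := by ext <;> simp [Finset.sum_add_distrib]
  map_smul' c p := by ext <;> simp [Finset.mul_sum]

section

variable {n : ℕ} {d : ℝ}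

theorem flowConstraints_surjective (hn : n ≠ 0) : Function.Surjective (flowConstraints n) := by
  rintro ⟨a, b⟩
  have h : (0 : Fin (n + 1)) ≠ Fin.last n := by simpa [eq_comm] using hn
  refine ⟨(0, Pi.single 0 a + Pi.single (Fin.last n) (b - a)), ?_⟩
  simp [flowConstraints, Pi.single_apply, h, Finset.sum_add_distrib]

theorem finrank_ker_flowConstraints (hn : n ≠ 0) :
    Module.finrank ℝ (LinearMap.ker (flowConstraints n)) = 2 * n - 1 := by
  have h := LinearMap.finrank_range_add_finrank_ker (flowConstraints n)
  rw [LinearMap.range_eq_top.2 (flowConstraints_surjective hn), finrank_top] at h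
  simp [Module.finrank_prod] at h
  omega

theorem flowConstraints_eq_of_mem_flowSet {p : FlowSpace n} (hp : p ∈ flowSet n d) :
    flowConstraints n p = (0, d) := by
  simp [flowConstraints, hp.2.1, hp.2.2.1]

theorem one_single_mem_flowSet (h₀ : -1 ≤ d) (h₁ : d ≤ 1) (k : Fin n) :
    ((1 : Fin n → ℝ), Pi.single k.succ d) ∈ flowSet n d := by
  refine ⟨by simp, by simp, by simp [Fin.succ_ne_zero], fun j => ?_⟩
  simp only [Pi.single_apply, Fin.succ_inj, Pi.one_apply]
  split_ifs <;> constructor <;> linarith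

theorem one_single_add_single_mem_flowSet (h₀ : 0 ≤ d) (h₁ : d ≤ 1) (j k : Fin n) :
    ((1 : Fin n → ℝ), Pi.single j.succ 1 + Pi.single k.succ (d - 1)) ∈ flowSet n d := by
  refine ⟨by simp, by simp [Finset.sum_add_distrib], by simp [Fin.succ_ne_zero],
    fun i => ?_⟩
  simp only [Pi.add_apply, Pi.single_apply, Fin.succ_inj, Pi.one_apply]
  split_ifs <;> constructor <;> linarith

theorem update_single_mem_flowSet (h₀ : -1 ≤ d) (h₁ : d ≤ 1) {j k : Fin n} (hjk : j ≠ k) :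
    (Function.update (1 : Fin n → ℝ) j 0, Pi.single k.succ d) ∈ flowSet n d := by
  refine ⟨fun i => ?_, by simp, by simp [Fin.succ_ne_zero], fun i => ?_⟩
  · by_cases hi : i = j <;> simp [hi]
  · simp only [Function.update_apply, Pi.single_apply, Fin.succ_inj, Pi.one_apply]
    split_ifs <;> first | (constructor <;> linarith) | simp_all

theorem single_sub_single_mem_vectorSpan (h₀ : 0 ≤ d) (h₁ : d ≤ 1) (j k : Fin n) :
    ((0 : Fin n → ℝ), Pi.single k.succ 1 - Pi.single j.succ 1) ∈ vectorSpan ℝ (flowSet n d) := by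
  convert vsub_mem_vectorSpan ℝ (one_single_mem_flowSet (by linarith) h₁ k)
    (one_single_add_single_mem_flowSet h₀ h₁ j k) using 1
  ext i
  · simp
  · simp only [Pi.sub_apply, Pi.add_apply, Pi.single_apply, vsub_eq_sub, Prod.snd_sub]
    split_ifs <;> ring

theorem single_zero_mem_vectorSpan (h₀ : -1 ≤ d) (h₁ : d ≤ 1) {j k : Fin n} (hjk : j ≠ k) :
    (Pi.single j 1, (0 : Fin (n + 1) → ℝ)) ∈ vectorSpan ℝ (flowSet n d) := by
  convert vsub_mem_vectorSpan ℝ (one_single_mem_flowSet h₀ h₁ k)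
    (update_single_mem_flowSet h₀ h₁ hjk) using 1
  ext i
  · by_cases hi : i = j <;> simp [hi]
  · simp

theorem ker_flowConstraints_le_vectorSpan (hn : 2 ≤ n) (h₀ : 0 ≤ d) (h₁ : d ≤ 1) :
    LinearMap.ker (flowConstraints n) ≤ vectorSpan ℝ (flowSet n d) := by
  have : Nontrivial (Fin n) := Fin.nontrivial_iff_two_le.2 hn
  have hx (x : Fin n → ℝ) : LinearMap.inl ℝ _ _ x ∈ vectorSpan ℝ (flowSet n d) := by
    rw [← Finset.univ_sum_single x, map_sum]
    refine Submodule.sum_mem _ fun j _ => ?_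
    obtain ⟨k, hkj⟩ := exists_ne j
    rw [← mul_one (x j), ← smul_eq_mul, Pi.single_smul', map_smul]
    exact Submodule.smul_mem _ (x j) (single_zero_mem_vectorSpan (by linarith) h₁ hkj.symm)
  have hf (f : Fin (n + 1) → ℝ) (h0 : f 0 = 0) (hsum : ∑ j, f j = 0) :
      LinearMap.inr ℝ _ _ f ∈ vectorSpan ℝ (flowSet n d) := by
    let i : Fin n := ⟨0, by omega⟩
    rw [← Finset.sum_smul_single_sub_single f hsum i.succ, Fin.sum_univ_succ, h0, zero_smul,
      zero_add, map_sum]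
    refine Submodule.sum_mem _ fun k _ => ?_
    rw [map_smul]
    exact Submodule.smul_mem _ (f k.succ) (single_sub_single_mem_vectorSpan h₀ h₁ i k)
  intro w hw
  obtain ⟨h0, hsum⟩ := Prod.ext_iff.1 hw
  have hw' : w = LinearMap.inl ℝ _ _ w.1 + LinearMap.inr ℝ _ _ w.2 := by ext <;> simp
  rw [hw']
  exact add_mem (hx w.1) (hf w.2 h0 hsum)

theorem vectorSpan_flowSet (hn : 2 ≤ n) (h₀ : 0 ≤ d) (h₁ : d ≤ 1) :
    vectorSpan ℝ (flowSet n d) = LinearMap.ker (flowConstraints n) :=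
  le_antisymm (vectorSpan_le_ker_of_forall_eq _ fun _ => flowConstraints_eq_of_mem_flowSet)
    (ker_flowConstraints_le_vectorSpan hn h₀ h₁)

end

/-- the dimension of (the affine span of) `S` is `2n - 1`. -/
theorem dim_S (n : ℕ) (hn : 3 ≤ n)
    (d : ℝ) (hd0 : 0 ≤ d) (hd : d < 1)
    (S : Set ((Fin n → ℝ) × (Fin (n + 1) → ℝ)))
    (hS : S = {p | (∀ j, p.1 j = 0 ∨ p.1 j = 1) ∧
      (∑ j, p.2 j) = d ∧ p.2 0 = 0 ∧
      ∀ j : Fin n, -(p.1 j) ≤ p.2 j.succ ∧ p.2 j.succ ≤ p.1 j}) :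
    Module.finrank ℝ (affineSpan ℝ S).direction = 2 * n - 1 := by
  rw [show S = flowSet n d from hS, direction_affineSpan, vectorSpan_flowSet (by omega) hd0 hd.le]
  exact finrank_ker_flowConstraints (by omega)
end

section
/- Assume f̲_0 = f̄_0 = 0, f̄_j = 1 for all j ∈ {1,…,n}, and 0 ≤ d < 1. Let c^x, c^f ∈ ℝ^n with c^x_i ≥ 0 for all i, and define I = argmin_i (c^x_i + c^f_i), J = argmin_j (c^x_j − c^f_j), and z = min_i (c^x_i + c^f_i) + min_j (c^x_j − c^f_j). If z < 0, then every (x,f) ∈ S minimizing (x,f) ↦ ∑_{k=1}^n (c^x_k x_k + c^f_k f_k) over S satisfies x_i + x_j ≥ 1 for all i ∈ I and j ∈ J. -/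
open scoped BigOperators

/-- if `z < 0`, every minimizer over `S` satisfies
`xᵢ + xⱼ ≥ 1` for all `i ∈ I`, `j ∈ J`. -/
theorem minimizer_xi_plus_xj_ge_one (n : ℕ) (hn : 1 ≤ n)
    (d : ℝ) (hd0 : 0 ≤ d) (hd : d < 1)
    (S : Set ((Fin n → ℝ) × (Fin (n + 1) → ℝ)))
    (hS : S = {p | (∀ j, p.1 j = 0 ∨ p.1 j = 1) ∧
      (∑ j, p.2 j) = d ∧ p.2 0 = 0 ∧
      ∀ j : Fin n, -(p.1 j) ≤ p.2 j.succ ∧ p.2 j.succ ≤ p.1 j})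
    (cx cf : Fin n → ℝ) (hcx : ∀ i, 0 ≤ cx i)
    (I J : Set (Fin n))
    (hI : I = {i | ∀ k, cx i + cf i ≤ cx k + cf k})
    (hJ : J = {j | ∀ k, cx j - cf j ≤ cx k - cf k})
    (i0 j0 : Fin n) (hi0 : i0 ∈ I) (hj0 : j0 ∈ J)
    (z : ℝ) (hz : z = (cx i0 + cf i0) + (cx j0 - cf j0)) (hzneg : z < 0) :
    ∀ p ∈ S,
      (∀ q ∈ S, (∑ k, (cx k * p.1 k + cf k * p.2 k.succ)) ≤
        (∑ k, (cx k * q.1 k + cf k * q.2 k.succ))) →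
      ∀ i ∈ I, ∀ j ∈ J, 1 ≤ p.1 i + p.1 j := by
  subst hS hI hJ
  intro p hp hmin i hi j hj
  by_contra hlt
  push_neg at hlt
  obtain ⟨hbin, hsum, h0, hbnd⟩ := hp
  have hxi : p.1 i = 0 := by
    rcases hbin i with h | h <;> rcases hbin j with h' | h' <;> linarith
  have hxj : p.1 j = 0 := by
    rcases hbin i with h | h <;> rcases hbin j with h' | h' <;> linarith
  have hfi : p.2 i.succ = 0 := by
    have h1 := (hbnd i).1; have h2 := (hbnd i).2
    rw [hxi] at h1 h2; linarith
  have hfj : p.2 j.succ = 0 := by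
    have h1 := (hbnd j).1; have h2 := (hbnd j).2
    rw [hxj] at h1 h2; linarith
  have hzle : (cx i + cf i) + (cx j - cf j) ≤ z := by
    rw [hz]; have h1 := hi i0; have h2 := hj j0
    linarith
  rcases eq_or_ne i j with rfl | hij
  · linarith [hcx i]
  have hij' : i.succ ≠ j.succ := fun h => hij (Fin.succ_injective n h)
  set q1 : Fin n → ℝ := Function.update (Function.update p.1 i 1) j 1 with hq1
  set q2 : Fin (n + 1) → ℝ :=
    Function.update (Function.update p.2 i.succ 1) j.succ (-1) with hq2
  have hq1i : q1 i = 1 := by simp [hq1, Function.update_apply, hij]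
  have hq1j : q1 j = 1 := by simp [hq1, Function.update_apply]
  have hq1k : ∀ k, k ≠ i → k ≠ j → q1 k = p.1 k := by
    intro k hki hkj; simp [hq1, Function.update_apply, hki, hkj]
  have hq2i : q2 i.succ = 1 := by simp [hq2, Function.update_apply, hij']
  have hq2j : q2 j.succ = -1 := by simp [hq2, Function.update_apply]
  have hq2k : ∀ k, k ≠ i.succ → k ≠ j.succ → q2 k = p.2 k := by
    intro k hki hkj; simp [hq2, Function.update_apply, hki, hkj]
  have hsub : ({i.succ, j.succ} : Finset (Fin (n + 1))) ⊆ Finset.univ :=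
    Finset.subset_univ _
  have hsplit2 : ∀ g : Fin (n + 1) → ℝ,
      ∑ k, g k = (∑ k ∈ Finset.univ \ {i.succ, j.succ}, g k) + (g i.succ + g j.succ) := by
    intro g
    rw [← Finset.sum_sdiff hsub, Finset.sum_pair hij']
  have hsub' : ({i, j} : Finset (Fin n)) ⊆ Finset.univ := Finset.subset_univ _
  have hsplit1 : ∀ g : Fin n → ℝ,
      ∑ k, g k = (∑ k ∈ Finset.univ \ {i, j}, g k) + (g i + g j) := by
    intro g
    rw [← Finset.sum_sdiff hsub', Finset.sum_pair hij]
  have hqS : (q1, q2) ∈ {p : (Fin n → ℝ) × (Fin (n + 1) → ℝ) |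
      (∀ j, p.1 j = 0 ∨ p.1 j = 1) ∧
      (∑ j, p.2 j) = d ∧ p.2 0 = 0 ∧
      ∀ j : Fin n, -(p.1 j) ≤ p.2 j.succ ∧ p.2 j.succ ≤ p.1 j} := by
    refine ⟨?_, ?_, ?_, ?_⟩ <;> dsimp only
    · intro k
      rcases eq_or_ne k i with rfl | hki
      · right; exact hq1i
      rcases eq_or_ne k j with rfl | hkj
      · right; exact hq1j
      · rw [hq1k k hki hkj]; exact hbin k
    · rw [hsplit2 q2, hq2i, hq2j]
      have : ∑ k ∈ Finset.univ \ {i.succ, j.succ}, q2 k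
          = ∑ k ∈ Finset.univ \ {i.succ, j.succ}, p.2 k := by
        refine Finset.sum_congr rfl fun k hk => ?_
        simp only [Finset.mem_sdiff, Finset.mem_insert, Finset.mem_singleton] at hk
        exact hq2k k (fun h => hk.2 (Or.inl h)) (fun h => hk.2 (Or.inr h))
      rw [this]
      have h2 := hsplit2 p.2
      rw [hfi, hfj] at h2
      linarith [hsum, h2]
    · rw [hq2k 0 (Fin.succ_ne_zero i).symm (Fin.succ_ne_zero j).symm]; exact h0
    · intro k
      rcases eq_or_ne k i with rfl | hki
      · rw [hq1i, hq2i]; norm_num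
      rcases eq_or_ne k j with rfl | hkj
      · rw [hq1j, hq2j]; norm_num
      · rw [hq1k k hki hkj,
          hq2k k.succ (fun h => hki (Fin.succ_injective n h))
            (fun h => hkj (Fin.succ_injective n h))]
        exact hbnd k
  have hle := hmin (q1, q2) hqS
  have hobj : (∑ k, (cx k * q1 k + cf k * q2 k.succ))
      = (∑ k, (cx k * p.1 k + cf k * p.2 k.succ))
        + ((cx i + cf i) + (cx j - cf j)) := by
    rw [hsplit1 (fun k => cx k * q1 k + cf k * q2 k.succ),
      hsplit1 (fun k => cx k * p.1 k + cf k * p.2 k.succ)]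
    have : ∑ k ∈ Finset.univ \ {i, j}, (cx k * q1 k + cf k * q2 k.succ)
        = ∑ k ∈ Finset.univ \ {i, j}, (cx k * p.1 k + cf k * p.2 k.succ) := by
      refine Finset.sum_congr rfl fun k hk => ?_
      simp only [Finset.mem_sdiff, Finset.mem_insert, Finset.mem_singleton] at hk
      have hki : k ≠ i := fun h => hk.2 (Or.inl h)
      have hkj : k ≠ j := fun h => hk.2 (Or.inr h)
      rw [hq1k k hki hkj,
        hq2k k.succ (fun h => hki (Fin.succ_injective n h))
          (fun h => hkj (Fin.succ_injective n h))]
    rw [this, hq1i, hq1j, hq2i, hq2j, hxi, hxj, hfi, hfj]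
    ring
  rw [hobj] at hle
  linarith
end
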